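/- arXiv:2308.10357 — 9 statements merged into one kernel-verified Lean document; each statement's English description precedes it below -/
import Mathlib

section
/- For every real θ, if μ₁ and μ₂ are the two complex roots of μ² - (2 + e^{-iθ})μ + 4 - (7/2)e^{-iθ} - (1/2)e^{iθ} = 0, then |μ₁ - μ₂| ≥ 3. -/
open Complex

theorem stmt_1 (θ : ℝ) (μ₁ μ₂ : ℂ)
    (hsum : μ₁ + μ₂ = 2 + Complex.exp (-(Complex.I * θ)))
    (hprod : μ₁ * μ₂ = 4 - (7 / 2) * Complex.exp (-(Complex.I * θ))
      - (1 / 2) * Complex.exp (Complex.I * θ)) :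
    3 ≤ ‖μ₁ - μ₂‖ := by
  have hep : Complex.exp (Complex.I * θ) = Real.cos θ + Real.sin θ * Complex.I := by
    rw [mul_comm, Complex.exp_mul_I]
    simp
  have hem : Complex.exp (-(Complex.I * θ)) = Real.cos θ - Real.sin θ * Complex.I := by
    have : -(Complex.I * (θ:ℂ)) = ((-θ : ℝ) : ℂ) * Complex.I := by push_cast; ring
    rw [this, Complex.exp_mul_I]
    simp
    ring
  set c := Real.cos θ
  set s := Real.sin θ
  have hsc : (s : ℂ) ^ 2 + (c : ℂ) ^ 2 = 1 := by
    have := Real.sin_sq_add_cos_sq θ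
    exact_mod_cast congrArg (Complex.ofReal) this
  have h1 : (μ₁ - μ₂) ^ 2 = (μ₁ + μ₂) ^ 2 - 4 * (μ₁ * μ₂) := by ring
  rw [hsum, hprod, hep, hem] at h1
  have h2 : (μ₁ - μ₂) ^ 2 =
      ((2 * c ^ 2 + 20 * c - 13 : ℝ) : ℂ) + ((-(s * (2 * c + 16)) : ℝ) : ℂ) * Complex.I := by
    rw [h1]
    push_cast
    linear_combination ((s : ℂ) ^ 2) * Complex.I_sq - hsc
  -- bound the modulus
  have habs : ‖(μ₁ - μ₂) ^ 2‖ = Real.sqrt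
      ((2 * c ^ 2 + 20 * c - 13) ^ 2 + (-(s * (2 * c + 16))) ^ 2) := by
    rw [h2, Complex.norm_def, Complex.normSq_add_mul_I]
  have hkey : 81 ≤ (2 * c ^ 2 + 20 * c - 13) ^ 2 + (-(s * (2 * c + 16))) ^ 2 := by
    have h1 : s ^ 2 + c ^ 2 = 1 := Real.sin_sq_add_cos_sq θ
    have hc1 : c ≤ 1 := Real.cos_le_one θ
    have hc2 : -1 ≤ c := Real.neg_one_le_cos θ
    nlinarith [sq_nonneg s, sq_nonneg (c - 1), sq_nonneg (c + 1), mul_nonneg (sub_nonneg.2 hc1) (sub_nonneg.2 hc2)]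
  have h9 : 9 ≤ ‖(μ₁ - μ₂) ^ 2‖ := by
    rw [habs]
    have := Real.sqrt_le_sqrt hkey
    calc (9 : ℝ) = Real.sqrt 81 := by
          rw [show (81 : ℝ) = 9 ^ 2 by norm_num, Real.sqrt_sq (by norm_num)]
      _ ≤ _ := this
  rw [norm_pow] at h9
  nlinarith [norm_nonneg (μ₁ - μ₂)]
end

section
/- For every real θ, the fourth power of the modulus of the difference of the two roots of μ² - (2 + e^{-iθ})μ + 4 - (7/2)e^{-iθ} - (1/2)e^{iθ} = 0 equals 425 - 456 cos θ + 96 cos²θ + 16 cos³θ. -/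
open Complex

theorem stmt_2 (θ : ℝ) (μ₁ μ₂ : ℂ)
    (hsum : μ₁ + μ₂ = 2 + Complex.exp (-(Complex.I * θ)))
    (hprod : μ₁ * μ₂ = 4 - (7 / 2) * Complex.exp (-(Complex.I * θ))
      - (1 / 2) * Complex.exp (Complex.I * θ)) :
    (‖μ₁ - μ₂‖) ^ 4
      = 425 - 456 * Real.cos θ + 96 * (Real.cos θ) ^ 2 + 16 * (Real.cos θ) ^ 3 := by
  have e1 : Complex.exp (Complex.I * θ) = Real.cos θ + Real.sin θ * Complex.I := by
    rw [mul_comm, Complex.exp_mul_I]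
    simp [← Complex.ofReal_cos, ← Complex.ofReal_sin]
  have e2 : Complex.exp (-(Complex.I * θ)) = Real.cos θ - Real.sin θ * Complex.I := by
    have h : -(Complex.I * (θ : ℂ)) = ((-θ : ℝ) : ℂ) * Complex.I := by push_cast; ring
    rw [h, Complex.exp_mul_I]
    simp [← Complex.ofReal_cos, ← Complex.ofReal_sin, sub_eq_add_neg]
  have hw : (μ₁ - μ₂) ^ 2
      = ((2 * Real.cos θ ^ 2 + 20 * Real.cos θ - 13 : ℝ) : ℂ)
        + ((-2 * Real.cos θ * Real.sin θ - 16 * Real.sin θ : ℝ) : ℂ) * Complex.I := by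
    have hw0 : (μ₁ - μ₂) ^ 2 = (μ₁ + μ₂) ^ 2 - 4 * (μ₁ * μ₂) := by ring
    rw [hw0, hsum, hprod, e1, e2]
    have hsc' : ((Real.cos θ : ℂ)) ^ 2 + ((Real.sin θ : ℂ)) ^ 2 = 1 := by
      push_cast [← Complex.ofReal_pow]
      exact_mod_cast Real.cos_sq_add_sin_sq θ
    push_cast [← Complex.ofReal_sin, ← Complex.ofReal_cos]
    linear_combination ((Real.sin θ : ℂ)) ^ 2 * Complex.I_sq - hsc'
  have h4 : (‖μ₁ - μ₂‖) ^ 4 = Complex.normSq ((μ₁ - μ₂) ^ 2) := by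
    rw [map_pow, ← Complex.sq_norm]; ring
  rw [h4, hw]
  rw [Complex.normSq_add_mul_I]
  have hs2 : Real.sin θ ^ 2 = 1 - Real.cos θ ^ 2 := by
    have := Real.sin_sq_add_cos_sq θ; linarith
  linear_combination 4 * (Real.cos θ + 8) ^ 2 * hs2
end

section
/- For every real θ, both roots μ₁, μ₂ of the quadratic μ² - (2 + e^{-iθ})μ + 4 - (7/2)e^{-iθ} - (1/2)e^{iθ} = 0 have nonnegative real part. -/
open Complex

lemma key (θ : ℝ) (μ : ℂ)
    (h : μ^2 - (2 + Complex.exp (-(Complex.I * θ)))*μ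
      + (4 - (7/2)*Complex.exp (-(Complex.I * θ)) - (1/2)*Complex.exp (Complex.I * θ)) = 0) :
    0 ≤ μ.re := by
  by_contra hneg
  push_neg at hneg
  have e1 : Complex.exp (Complex.I * θ) = (Real.cos θ : ℂ) + (Real.sin θ : ℂ) * Complex.I := by
    rw [mul_comm, Complex.exp_mul_I]
    simp
  have e2 : Complex.exp (-(Complex.I * θ)) = (Real.cos θ : ℂ) - (Real.sin θ : ℂ) * Complex.I := by
    have : -(Complex.I * (θ:ℂ)) = ((-θ : ℝ) : ℂ) * Complex.I := by push_cast; ring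
    rw [this, Complex.exp_mul_I]
    push_cast
    simp [Complex.cos_neg, Complex.sin_neg]
    ring
  rw [e1, e2] at h
  set a := μ.re with ha
  set b := μ.im with hb
  set x := Real.cos θ
  set y := Real.sin θ
  have hre := congrArg Complex.re h
  have him := congrArg Complex.im h
  simp [Complex.ext_iff, pow_two, Complex.add_re, Complex.mul_re, Complex.mul_im] at hre him
  have pyth : x^2 + y^2 = 1 := by
    simp [x, y, Real.cos_sq_add_sin_sq]
  have hx1 : x ≤ 1 := Real.cos_le_one θ
  have hx2 : -1 ≤ x := Real.neg_one_le_cos θ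
  rw [← ha, ← hb] at hre him
  have hF : (1-x)^3 + (-a)*(42-3*x-12*x^2) + a^2*(37+4*x+4*x^2)
      + (-8*a^3)*(2+x) + 4*a^4 = 0 := by
    linear_combination ((2+x-2*a)^2)*hre
      - (b*(2+x-2*a) + y*(a+3) + y*(2+x-2*a))*him + (a+3)*(5+x-a)*pyth
  have t1 : 0 < (-a) * (42-3*x-12*x^2) :=
    mul_pos (by linarith) (by nlinarith [sq_nonneg x])
  have t2 : (0:ℝ) ≤ a^2*(37+4*x+4*x^2) :=
    mul_nonneg (sq_nonneg a) (by nlinarith [sq_nonneg x])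
  have t3 : (0:ℝ) ≤ (-8*a^3)*(2+x) := by
    have h1 : (0:ℝ) < -8*a^3 := by nlinarith [mul_pos (mul_pos (neg_pos.mpr hneg) (neg_pos.mpr hneg)) (neg_pos.mpr hneg)]
    exact mul_nonneg h1.le (by linarith)
  have t4 : (0:ℝ) ≤ 4*a^4 := by positivity
  have t5 : (0:ℝ) ≤ (1-x)^3 := by
    have : (0:ℝ) ≤ 1-x := by linarith
    positivity
  linarith

theorem stmt_3 (θ : ℝ) (μ₁ μ₂ : ℂ)
    (hsum : μ₁ + μ₂ = 2 + Complex.exp (-(Complex.I * θ)))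
    (hprod : μ₁ * μ₂ = 4 - (7 / 2) * Complex.exp (-(Complex.I * θ))
      - (1 / 2) * Complex.exp (Complex.I * θ)) :
    0 ≤ μ₁.re ∧ 0 ≤ μ₂.re := by
  constructor
  · exact key θ μ₁ (by linear_combination μ₁*hsum - hprod)
  · exact key θ μ₂ (by linear_combination μ₂*hsum - hprod)
end

section
/- Define a(θ) = (-8 + 7e^{-iθ} + e^{iθ})/(2iθ) and b(θ) = 2 + e^{-iθ} for θ ≠ 0. Then there exists a constant C₁ > 0 and a function c₁ : ℝ \ {0} → ℂ with |c₁(θ)| ≤ C₁ for all θ, such that a(θ) + b(θ) = iθ + c₁(θ)θ⁴. -/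
open Complex

lemma stmt6_key (θ : ℝ) :
    ‖(-8 + 7 * Complex.exp (-(Complex.I * θ)) + Complex.exp (Complex.I * θ))
      + 2 * Complex.I * θ * (2 + Complex.exp (-(Complex.I * θ))) + 2 * θ^2‖
    ≤ 24 * |θ|^5 := by
  have hE : ‖Complex.exp (Complex.I * θ)‖ = 1 := by
    simp [Complex.norm_exp]
  have hE' : ‖Complex.exp (-(Complex.I * θ))‖ = 1 := by
    simp [Complex.norm_exp]
  have habsI : ‖Complex.I * θ‖ = |θ| := by
    simp [norm_mul, Complex.norm_real, Real.norm_eq_abs]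
  have habsI' : ‖-(Complex.I * θ)‖ = |θ| := by
    simp [norm_mul, Complex.norm_real, Real.norm_eq_abs]
  rcases le_or_gt |θ| 1 with hθ | hθ
  · -- small θ : use Taylor expansion
    have hb1 := Complex.exp_bound (x := Complex.I * θ) (by rw [habsI]; exact hθ)
      (n := 5) (by norm_num)
    have hb2 := Complex.exp_bound (x := -(Complex.I * θ)) (by rw [habsI']; exact hθ)
      (n := 5) (by norm_num)
    rw [habsI] at hb1
    rw [habsI'] at hb2
    have hfact : ((5+1 : ℕ) : ℝ) * (((Nat.factorial 5 : ℕ) : ℝ) * (5:ℕ))⁻¹ = 1/100 := by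
      norm_num [Nat.factorial]
    rw [show (Nat.succ 5 : ℝ) = ((5+1 : ℕ) : ℝ) by norm_num] at hb1 hb2
    rw [hfact] at hb1 hb2
    have hid :
        (-8 + 7 * Complex.exp (-(Complex.I * θ)) + Complex.exp (Complex.I * θ))
          + 2 * Complex.I * θ * (2 + Complex.exp (-(Complex.I * θ))) + 2 * θ^2
        = Complex.I * θ^5 / 12
          + (Complex.exp (Complex.I * θ) - ∑ m ∈ Finset.range 5, (Complex.I * θ) ^ m / m.factorial)
          + 7 * (Complex.exp (-(Complex.I * θ)) - ∑ m ∈ Finset.range 5, (-(Complex.I * θ)) ^ m / m.factorial)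
          + 2 * Complex.I * θ * (Complex.exp (-(Complex.I * θ)) - ∑ m ∈ Finset.range 5, (-(Complex.I * θ)) ^ m / m.factorial) := by
      simp [Finset.sum_range_succ, Nat.factorial]
      ring_nf
      rw [show (Complex.I)^5 = Complex.I from by simp [pow_succ, Complex.I_sq]]
      rw [Complex.I_sq]; ring
    rw [hid]
    have h1 : ‖Complex.I * θ^5 / 12‖ = |θ|^5 / 12 := by
      simp [norm_div, norm_mul, Complex.norm_real, Real.norm_eq_abs, ← abs_pow]
    calc ‖_‖ ≤ ‖Complex.I * θ^5 / 12‖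
          + ‖Complex.exp (Complex.I * θ) - ∑ m ∈ Finset.range 5, (Complex.I * θ) ^ m / m.factorial‖
          + ‖7 * (Complex.exp (-(Complex.I * θ)) - ∑ m ∈ Finset.range 5, (-(Complex.I * θ)) ^ m / m.factorial)‖
          + ‖2 * Complex.I * θ * (Complex.exp (-(Complex.I * θ)) - ∑ m ∈ Finset.range 5, (-(Complex.I * θ)) ^ m / m.factorial)‖ := by
            exact (norm_add_le _ _).trans (by
              gcongr <;> exact (norm_add_le _ _).trans (by gcongr; exact norm_add_le _ _))
      _ ≤ 24 * |θ|^5 := by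
          rw [h1, norm_mul, norm_mul, norm_mul, norm_mul]
          simp only [Complex.norm_ofNat, Complex.norm_I, Complex.norm_real, Real.norm_eq_abs]
          have h0 : (0:ℝ) ≤ |θ| := abs_nonneg θ
          nlinarith [abs_nonneg θ, pow_nonneg h0 5, pow_nonneg h0 6,
            mul_le_mul_of_nonneg_left hb2 (by positivity : (0:ℝ) ≤ 2 * 1 * |θ|)]
  · -- large θ : crude bound
    calc ‖_‖ ≤ ‖-8 + 7 * Complex.exp (-(Complex.I * θ)) + Complex.exp (Complex.I * θ)‖
          + ‖2 * Complex.I * θ * (2 + Complex.exp (-(Complex.I * θ)))‖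
          + ‖(2:ℂ) * θ^2‖ := by
            exact (norm_add_le _ _).trans (by gcongr; exact norm_add_le _ _)
      _ ≤ (8 + 7 + 1) + 2 * |θ| * 3 + 2 * |θ|^2 := by
          gcongr
          · calc ‖-8 + 7 * Complex.exp (-(Complex.I * θ)) + Complex.exp (Complex.I * θ)‖
                ≤ ‖-8 + 7 * Complex.exp (-(Complex.I * θ))‖ + ‖Complex.exp (Complex.I * θ)‖ :=
                  norm_add_le _ _
              _ ≤ (‖(-8 : ℂ)‖ + ‖7 * Complex.exp (-(Complex.I * θ))‖) + 1 := by
                  rw [hE]; gcongr; exact norm_add_le _ _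
              _ = 8 + 7 + 1 := by rw [norm_mul, hE']; norm_num
          · rw [norm_mul, norm_mul, norm_mul]
            simp only [Complex.norm_ofNat, Complex.norm_I, Complex.norm_real, Real.norm_eq_abs, mul_one]
            gcongr
            calc ‖2 + Complex.exp (-(Complex.I * θ))‖ ≤ ‖(2:ℂ)‖ + 1 := by
                  rw [← hE']; exact norm_add_le _ _
              _ = 3 := by norm_num
          · rw [norm_mul, norm_pow]
            simp [Complex.norm_real, Real.norm_eq_abs]
      _ ≤ 24 * |θ|^5 := by
          have h1 : (1:ℝ) ≤ |θ| := le_of_lt hθ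
          nlinarith [pow_le_pow_right₀ h1 (show 1 ≤ 5 by norm_num),
            pow_le_pow_right₀ h1 (show 2 ≤ 5 by norm_num),
            one_le_pow₀ h1 (n:=5), pow_pos (lt_of_lt_of_le one_pos h1) 5]

theorem stmt_6
    (a b : ℝ → ℂ)
    (ha : ∀ θ : ℝ, θ ≠ 0 → a θ =
      (-8 + 7 * Complex.exp (-(Complex.I * θ)) + Complex.exp (Complex.I * θ)) /
        (2 * Complex.I * θ))
    (hb : ∀ θ : ℝ, θ ≠ 0 → b θ = 2 + Complex.exp (-(Complex.I * θ))) :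
    ∃ C₁ > 0, ∃ c₁ : ℝ → ℂ,
      (∀ θ : ℝ, θ ≠ 0 → ‖c₁ θ‖ ≤ C₁) ∧
      (∀ θ : ℝ, θ ≠ 0 → a θ + b θ = Complex.I * θ + c₁ θ * (θ : ℂ) ^ 4) := by
  refine ⟨12, by norm_num, fun θ => (a θ + b θ - Complex.I * θ) / (θ:ℂ)^4, ?_, ?_⟩
  · intro θ hθ
    have hθC : (θ:ℂ) ≠ 0 := by exact_mod_cast hθ
    have hdiff : a θ + b θ - Complex.I * θ =
        ((-8 + 7 * Complex.exp (-(Complex.I * θ)) + Complex.exp (Complex.I * θ))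
          + 2 * Complex.I * θ * (2 + Complex.exp (-(Complex.I * θ))) + 2 * θ^2) / (2 * Complex.I * θ) := by
      rw [ha θ hθ, hb θ hθ]
      field_simp
      ring_nf
      rw [Complex.I_sq]; ring
    have hkey := stmt6_key θ
    have hθpos : 0 < |θ| := abs_pos.mpr hθ
    rw [norm_div, hdiff, norm_div]
    rw [norm_mul, norm_mul]
    simp only [Complex.norm_ofNat, Complex.norm_I, Complex.norm_real, Real.norm_eq_abs, mul_one, norm_pow,
      Complex.norm_real, Real.norm_eq_abs]
    rw [div_div]
    rw [div_le_iff₀ (by positivity)]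
    calc ‖_‖ ≤ 24 * |θ|^5 := hkey
      _ = 12 * (2 * |θ| * |θ| ^ 4) := by ring
  · intro θ hθ
    have hθC : (θ:ℂ) ≠ 0 := by exact_mod_cast hθ
    field_simp
    ring
end

section
/- Let w be a function of class C⁴ on an interval containing [x - h, x + h] with h > 0. Define the hybrid discrete derivative D⁻w = (1/h)(w(x-h) - (7/2)·w̄₋ + 2w(x) + (1/2)·w̄₊), where w̄₋ = (1/h)∫_{x-h}^{x} w and w̄₊ = (1/h)∫_{x}^{x+h} w. Then |D⁻w - w'(x)| ≤ C h³, where C depends only on the supremum of |w⁗| on [x-h, x+h]. -/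
open Set intervalIntegral


theorem twoSided_taylor_bound {f : ℝ → ℝ} {a b C x₀ y : ℝ} {n : ℕ} (hab : a < b)
    (hf : ContDiffOn ℝ (n + 1) f (Set.Icc a b)) (hx₀ : x₀ ∈ Set.Icc a b)
    (hy : y ∈ Set.Icc a b)
    (hC : ∀ z ∈ Set.Icc a b, |iteratedDerivWithin (n + 1) f (Set.Icc a b) z| ≤ C) :
    |f y - taylorWithinEval f n (Set.Icc a b) x₀ y| ≤ (n.factorial : ℝ)⁻¹ * |y - x₀| ^ (n + 1) * C := by
  have hC0 : 0 ≤ C := le_trans (abs_nonneg _) (hC x₀ hx₀)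
  have hf' : DifferentiableOn ℝ (iteratedDerivWithin n f (Set.Icc a b)) (Set.Icc a b) :=
    hf.differentiableOn_iteratedDerivWithin (by exact_mod_cast Nat.lt_succ_self n)
      (uniqueDiffOn_Icc hab)
  have hD : ∀ t ∈ Set.Icc a b, HasDerivWithinAt (fun t => taylorWithinEval f n (Set.Icc a b) t y)
      (((n.factorial : ℝ)⁻¹ * (y - t) ^ n) • iteratedDerivWithin (n + 1) f (Set.Icc a b) t)
      (Set.Icc a b) t := fun t ht =>
    hasDerivWithinAt_taylorWithinEval_at_Icc y hab ht hf.of_succ hf'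
  rcases le_total x₀ y with hxy | hxy
  · -- x₀ ≤ y : work on Icc x₀ y
    have hsub : Set.Icc x₀ y ⊆ Set.Icc a b := Set.Icc_subset_Icc hx₀.1 hy.2
    have bound : ∀ t ∈ Set.Ico x₀ y,
        ‖((n.factorial : ℝ)⁻¹ * (y - t) ^ n) • iteratedDerivWithin (n + 1) f (Set.Icc a b) t‖ ≤
          (n.factorial : ℝ)⁻¹ * |y - x₀| ^ n * C := by
      intro t ht
      rw [norm_smul, Real.norm_eq_abs, Real.norm_eq_abs, abs_mul, abs_pow, abs_inv, Nat.abs_cast]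
      have habs : |y - t| ≤ |y - x₀| := by
        calc |y - t| = y - t := abs_of_nonneg (by linarith [ht.2.le])
          _ ≤ y - x₀ := by linarith [ht.1]
          _ ≤ |y - x₀| := le_abs_self _
      exact mul_le_mul (mul_le_mul le_rfl (pow_le_pow_left₀ (abs_nonneg _) habs n)
        (by positivity) (by positivity)) (hC t (hsub ⟨ht.1, ht.2.le⟩)) (abs_nonneg _)
        (by positivity)
    have := norm_image_sub_le_of_norm_deriv_le_segment'
      (fun t ht => (hD t (hsub ht)).mono hsub) bound y (Set.right_mem_Icc.2 hxy)
    rw [taylorWithinEval_self] at this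
    rw [abs_sub_comm]
    calc |taylorWithinEval f n (Set.Icc a b) x₀ y - f y|
        = ‖f y - (fun t => taylorWithinEval f n (Set.Icc a b) t y) x₀‖ := by
          simp [Real.norm_eq_abs, abs_sub_comm]
      _ ≤ (n.factorial : ℝ)⁻¹ * |y - x₀| ^ n * C * (y - x₀) := this
      _ = (n.factorial : ℝ)⁻¹ * |y - x₀| ^ (n + 1) * C := by
          rw [abs_of_nonneg (by linarith)]; ring
  · -- y ≤ x₀ : work on Icc y x₀
    have hsub : Set.Icc y x₀ ⊆ Set.Icc a b := Set.Icc_subset_Icc hy.1 hx₀.2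
    have bound : ∀ t ∈ Set.Ico y x₀,
        ‖((n.factorial : ℝ)⁻¹ * (y - t) ^ n) • iteratedDerivWithin (n + 1) f (Set.Icc a b) t‖ ≤
          (n.factorial : ℝ)⁻¹ * |y - x₀| ^ n * C := by
      intro t ht
      rw [norm_smul, Real.norm_eq_abs, Real.norm_eq_abs, abs_mul, abs_pow, abs_inv, Nat.abs_cast]
      have habs : |y - t| ≤ |y - x₀| := by
        calc |y - t| = t - y := by rw [abs_sub_comm]; exact abs_of_nonneg (by linarith [ht.1])
          _ ≤ x₀ - y := by linarith [ht.2.le]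
          _ = |y - x₀| := by rw [abs_sub_comm]; exact (abs_of_nonneg (by linarith)).symm
      exact mul_le_mul (mul_le_mul le_rfl (pow_le_pow_left₀ (abs_nonneg _) habs n)
        (by positivity) (by positivity)) (hC t (hsub ⟨ht.1, ht.2.le⟩)) (abs_nonneg _)
        (by positivity)
    have := norm_image_sub_le_of_norm_deriv_le_segment'
      (fun t ht => (hD t (hsub ht)).mono hsub) bound x₀ (Set.right_mem_Icc.2 hxy)
    rw [taylorWithinEval_self] at this
    calc |f y - taylorWithinEval f n (Set.Icc a b) x₀ y|
        = ‖(fun t => taylorWithinEval f n (Set.Icc a b) t y) x₀ - f y‖ := by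
          simp [Real.norm_eq_abs, abs_sub_comm]
      _ ≤ (n.factorial : ℝ)⁻¹ * |y - x₀| ^ n * C * (x₀ - y) := this
      _ = (n.factorial : ℝ)⁻¹ * |y - x₀| ^ (n + 1) * C := by
          rw [abs_sub_comm, abs_of_nonneg (by linarith)]; ring

open intervalIntegral

theorem stmt_7 :
    ∃ C > 0, ∀ (w : ℝ → ℝ) (x h M : ℝ), 0 < h →
      ContDiffOn ℝ 4 w (Set.Icc (x - h) (x + h)) →
      (∀ y ∈ Set.Icc (x - h) (x + h),
        |iteratedDerivWithin 4 w (Set.Icc (x - h) (x + h)) y| ≤ M) →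
      |(1 / h) * (w (x - h) - (7 / 2) * ((1 / h) * ∫ y in (x - h)..x, w y)
          + 2 * w x + (1 / 2) * ((1 / h) * ∫ y in x..(x + h), w y))
        - derivWithin w (Set.Icc (x - h) (x + h)) x| ≤ C * M * h ^ 3 := by
  refine ⟨5 / 6, by norm_num, fun w x h M hh hw hM => ?_⟩
  set s := Set.Icc (x - h) (x + h) with hs
  have hab : x - h < x + h := by linarith
  have hxs : x ∈ s := Set.mem_Icc.mpr ⟨by linarith, by linarith⟩
  have hM0 : 0 ≤ M := le_trans (abs_nonneg _) (hM x hxs)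
  have hw' : ContDiffOn ℝ ((3 : ℕ) + 1) w s := by exact_mod_cast hw
  have hM' : ∀ z ∈ s, |iteratedDerivWithin ((3 : ℕ) + 1) w s z| ≤ M := hM
  -- Taylor coefficients
  set a0 := iteratedDerivWithin 0 w s x with ha0
  set a1 := iteratedDerivWithin 1 w s x with ha1
  set a2 := iteratedDerivWithin 2 w s x with ha2
  set a3 := iteratedDerivWithin 3 w s x with ha3
  set P : ℝ → ℝ := fun y => taylorWithinEval w 3 s x y with hPdef
  have hP : ∀ y, P y = a0 + (y - x) * a1 + (y - x) ^ 2 / 2 * a2 + (y - x) ^ 3 / 6 * a3 := by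
    intro y
    show taylorWithinEval w 3 s x y = _
    rw [taylor_within_apply]
    simp [Finset.sum_range_succ, Nat.factorial, ha0, ha1, ha2, ha3]
    ring
  -- remainder bound
  have hrem : ∀ y ∈ s, |w y - P y| ≤ M * |y - x| ^ 4 / 6 := by
    intro y hy
    have := twoSided_taylor_bound (n := 3) hab hw' hxs hy hM'
    calc |w y - P y| ≤ ((3 : ℕ).factorial : ℝ)⁻¹ * |y - x| ^ (3 + 1) * M := this
      _ = M * |y - x| ^ 4 / 6 := by norm_num [Nat.factorial]; ring
  -- continuity / integrability
  have hwc : ContinuousOn w s := hw.continuousOn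
  have hPc : Continuous P := by
    have : P = fun y => a0 + (y - x) * a1 + (y - x) ^ 2 / 2 * a2 + (y - x) ^ 3 / 6 * a3 :=
      funext hP
    rw [this]; fun_prop
  have hintmw : IntervalIntegrable w MeasureTheory.volume (x - h) x := by
    apply ContinuousOn.intervalIntegrable
    apply hwc.mono
    rw [Set.uIcc_of_le (show x - h ≤ x by linarith)]
    exact Set.Icc_subset_Icc le_rfl (by linarith)
  have hintpw : IntervalIntegrable w MeasureTheory.volume x (x + h) := by
    apply ContinuousOn.intervalIntegrable
    apply hwc.mono
    rw [Set.uIcc_of_le (show x ≤ x + h by linarith)]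
    exact Set.Icc_subset_Icc (by linarith) le_rfl
  -- split integrals
  set Jm := ∫ y in (x - h)..x, (w y - P y) with hJm
  set Jp := ∫ y in x..(x + h), (w y - P y) with hJp
  -- antiderivative of P
  set F : ℝ → ℝ := fun y => a0 * (y - x) + a1 * (y - x) ^ 2 / 2 + a2 * (y - x) ^ 3 / 6
      + a3 * (y - x) ^ 4 / 24 with hFdef
  have hF : ∀ y : ℝ, HasDerivAt F (P y) y := by
    intro y
    have h1 : HasDerivAt (fun y : ℝ => y - x) 1 y := (hasDerivAt_id y).sub_const x
    have d0 : HasDerivAt (fun y : ℝ => a0 * (y - x)) a0 y := by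
      simpa using (h1.const_mul a0)
    have d1 : HasDerivAt (fun y : ℝ => a1 * (y - x) ^ 2 / 2) ((y - x) * a1) y := by
      have := ((h1.fun_pow 2).const_mul a1).div_const 2
      refine this.congr_deriv ?_; simp; ring
    have d2 : HasDerivAt (fun y : ℝ => a2 * (y - x) ^ 3 / 6) ((y - x) ^ 2 / 2 * a2) y := by
      have := ((h1.fun_pow 3).const_mul a2).div_const 6
      refine this.congr_deriv ?_; simp; ring
    have d3 : HasDerivAt (fun y : ℝ => a3 * (y - x) ^ 4 / 24) ((y - x) ^ 3 / 6 * a3) y := by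
      have := ((h1.fun_pow 4).const_mul a3).div_const 24
      refine this.congr_deriv ?_; simp; ring
    have := ((d0.add d1).add d2).add d3
    rw [hP y]
    exact this
  have hPint : ∀ u v : ℝ, ∫ y in u..v, P y = F v - F u := by
    intro u v
    exact integral_eq_sub_of_hasDerivAt (fun y _ => hF y) (hPc.intervalIntegrable u v)
  have hsplitm : (∫ y in (x - h)..x, w y) = (F x - F (x - h)) + Jm := by
    rw [hJm, integral_sub hintmw (hPc.intervalIntegrable _ _), hPint]
    ring
  have hsplitp : (∫ y in x..(x + h), w y) = (F (x + h) - F x) + Jp := by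
    rw [hJp, integral_sub hintpw (hPc.intervalIntegrable _ _), hPint]
    ring
  have hderiv : derivWithin w s x = a1 := by
    rw [ha1, iteratedDerivWithin_one]
  -- the key algebraic identity
  have key : (1 / h) * (w (x - h) - (7 / 2) * ((1 / h) * ∫ y in (x - h)..x, w y)
          + 2 * w x + (1 / 2) * ((1 / h) * ∫ y in x..(x + h), w y))
        - derivWithin w s x
      = (1 / h) * ((w (x - h) - P (x - h)) - (7 / 2) * ((1 / h) * Jm)
          + 2 * (w x - P x) + (1 / 2) * ((1 / h) * Jp)) := by
    rw [hsplitm, hsplitp, hderiv, hP (x - h), hP x, hFdef]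
    field_simp
    ring
  rw [key]
  -- bounds on remainder terms
  have hr1 : |w (x - h) - P (x - h)| ≤ M * h ^ 4 / 6 := by
    have := hrem (x - h) (Set.mem_Icc.mpr ⟨by linarith, by linarith⟩)
    calc |w (x - h) - P (x - h)| ≤ M * |x - h - x| ^ 4 / 6 := this
      _ = M * h ^ 4 / 6 := by
        rw [show x - h - x = -h by ring, abs_neg, abs_of_pos hh]
  have hr2 : w x - P x = 0 := by
    have := hrem x hxs
    simp at this
    have h0 : |w x - P x| ≤ 0 := by simpa using this
    exact abs_eq_zero.mp (le_antisymm h0 (abs_nonneg _))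
  have hJm : |Jm| ≤ M * h ^ 4 / 6 * h := by
    have : ‖Jm‖ ≤ M * h ^ 4 / 6 * |x - (x - h)| := by
      apply intervalIntegral.norm_integral_le_of_norm_le_const
      intro y hy
      rw [Set.uIoc_of_le (by linarith)] at hy
      have hys : y ∈ s := ⟨hy.1.le, by linarith [hy.2]⟩
      have := hrem y hys
      calc ‖w y - P y‖ = |w y - P y| := rfl
        _ ≤ M * |y - x| ^ 4 / 6 := this
        _ ≤ M * h ^ 4 / 6 := by
            have hyx : |y - x| ≤ h := by
              rw [abs_le]; exact ⟨by linarith [hy.1], by linarith [hy.2]⟩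
            gcongr
    calc |Jm| ≤ M * h ^ 4 / 6 * |x - (x - h)| := this
      _ = M * h ^ 4 / 6 * h := by rw [show x - (x - h) = h by ring, abs_of_pos hh]
  have hJp : |Jp| ≤ M * h ^ 4 / 6 * h := by
    have : ‖Jp‖ ≤ M * h ^ 4 / 6 * |x + h - x| := by
      apply intervalIntegral.norm_integral_le_of_norm_le_const
      intro y hy
      rw [Set.uIoc_of_le (by linarith)] at hy
      have hys : y ∈ s := ⟨by linarith [hy.1], hy.2⟩
      have := hrem y hys
      calc ‖w y - P y‖ = |w y - P y| := rfl
        _ ≤ M * |y - x| ^ 4 / 6 := this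
        _ ≤ M * h ^ 4 / 6 := by
            have hyx : |y - x| ≤ h := by
              rw [abs_le]; exact ⟨by linarith [hy.1], by linarith [hy.2]⟩
            gcongr
    calc |Jp| ≤ M * h ^ 4 / 6 * |x + h - x| := this
      _ = M * h ^ 4 / 6 * h := by rw [show x + h - x = h by ring, abs_of_pos hh]
  -- final estimate
  have hB : (0 : ℝ) < 1 / h := by positivity
  rw [hr2]
  rw [abs_mul, abs_of_pos hB]
  have hsum : |(w (x - h) - P (x - h)) - (7 / 2) * ((1 / h) * Jm) + 2 * 0
      + (1 / 2) * ((1 / h) * Jp)|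
      ≤ M * h ^ 4 / 6 + (7 / 2) * ((1 / h) * (M * h ^ 4 / 6 * h))
        + (1 / 2) * ((1 / h) * (M * h ^ 4 / 6 * h)) := by
    have hu : |(1 / h) * Jm| ≤ (1 / h) * (M * h ^ 4 / 6 * h) := by
      rw [abs_mul, abs_of_pos hB]; exact mul_le_mul_of_nonneg_left hJm hB.le
    have hv : |(1 / h) * Jp| ≤ (1 / h) * (M * h ^ 4 / 6 * h) := by
      rw [abs_mul, abs_of_pos hB]; exact mul_le_mul_of_nonneg_left hJp hB.le
    rw [abs_le]
    constructor <;>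
      linarith [neg_abs_le (w (x - h) - P (x - h)), le_abs_self (w (x - h) - P (x - h)),
        neg_abs_le ((1 / h) * Jm), le_abs_self ((1 / h) * Jm),
        neg_abs_le ((1 / h) * Jp), le_abs_self ((1 / h) * Jp), hr1, hu, hv]
  calc (1 / h) * |(w (x - h) - P (x - h)) - (7 / 2) * ((1 / h) * Jm) + 2 * 0
        + (1 / 2) * ((1 / h) * Jp)|
      ≤ (1 / h) * (M * h ^ 4 / 6 + (7 / 2) * ((1 / h) * (M * h ^ 4 / 6 * h))
        + (1 / 2) * ((1 / h) * (M * h ^ 4 / 6 * h))) := by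
        exact mul_le_mul_of_nonneg_left hsum hB.le
    _ = 5 / 6 * M * h ^ 3 := by field_simp; ring
end

section
/- Let w be a function of class C⁴ on an interval containing [x - h, x + h] with h > 0. Define the hybrid discrete derivative D⁺w = (1/h)(-(1/2)·w̄₋ - 2w(x) + (7/2)·w̄₊ - w(x+h)), where w̄₋ = (1/h)∫_{x-h}^{x} w and w̄₊ = (1/h)∫_{x}^{x+h} w. Then |D⁺w - w'(x)| ≤ C h³ with C depending only on sup |w⁗| on [x-h, x+h]. -/
open intervalIntegral Set

lemma step_bound {x h : ℝ} (hh : 0 < h) (u g : ℝ → ℝ) (A B : ℝ) (k : ℕ)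
    (hAB : A = B * (k + 1))
    (hu : ∀ y ∈ Icc (x - h) (x + h), HasDerivWithinAt u (g y) (Icc (x - h) (x + h)) y)
    (hg : ContinuousOn g (Icc (x - h) (x + h)))
    (hux : u x = 0)
    (hb : ∀ y ∈ Icc (x - h) (x + h), |g y| ≤ A * |y - x| ^ k) :
    ∀ y ∈ Icc (x - h) (x + h), |u y| ≤ B * |y - x| ^ (k + 1) := by
  intro y hy
  rcases le_total x y with hxy | hxy
  · have hsub : Icc x y ⊆ Icc (x - h) (x + h) := Icc_subset_Icc (by linarith) hy.2
    have hcont : ContinuousOn u (Icc x y) :=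
      fun t ht => ((hu t (hsub ht)).continuousWithinAt).mono hsub
    have hgi : IntervalIntegrable g MeasureTheory.volume x y := by
      apply ContinuousOn.intervalIntegrable
      rw [uIcc_of_le hxy]; exact hg.mono hsub
    have hderiv : ∀ t ∈ Ioo x y, HasDerivWithinAt u (g t) (Ioi t) t := by
      intro t ht
      have hmem : Icc (x - h) (x + h) ∈ nhds t :=
        Icc_mem_nhds (by linarith [ht.1]) (by linarith [ht.2, hy.2])
      exact ((hu t (hsub (Ioo_subset_Icc_self ht))).hasDerivAt hmem).hasDerivWithinAt
    have key : ∫ t in x..y, g t = u y - u x :=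
      integral_eq_sub_of_hasDeriv_right_of_le hxy hcont hderiv hgi
    have hbi : IntervalIntegrable (fun t => A * (t - x) ^ k) MeasureTheory.volume x y :=
      (Continuous.intervalIntegrable (by fun_prop) _ _)
    calc |u y| = |∫ t in x..y, g t| := by rw [key, hux, sub_zero]
      _ ≤ ∫ t in x..y, |g t| := abs_integral_le_integral_abs hxy
      _ ≤ ∫ t in x..y, A * (t - x) ^ k := by
          apply intervalIntegral.integral_mono_on hxy hgi.abs hbi
          intro t ht
          have := hb t (hsub ht)
          rwa [abs_of_nonneg (by linarith [ht.1] : (0:ℝ) ≤ t - x)] at this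
      _ = B * |y - x| ^ (k + 1) := by
          rw [intervalIntegral.integral_const_mul,
            intervalIntegral.integral_comp_sub_right (fun t => t ^ k) x, integral_pow,
            abs_of_nonneg (by linarith : (0:ℝ) ≤ y - x), hAB]
          have : (x - x : ℝ) ^ (k + 1) = 0 := by simp
          rw [this]
          field_simp
          ring
  · have hsub : Icc y x ⊆ Icc (x - h) (x + h) := Icc_subset_Icc hy.1 (by linarith)
    have hcont : ContinuousOn u (Icc y x) :=
      fun t ht => ((hu t (hsub ht)).continuousWithinAt).mono hsub
    have hgi : IntervalIntegrable g MeasureTheory.volume y x := by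
      apply ContinuousOn.intervalIntegrable
      rw [uIcc_of_le hxy]; exact hg.mono hsub
    have hderiv : ∀ t ∈ Ioo y x, HasDerivWithinAt u (g t) (Ioi t) t := by
      intro t ht
      have hmem : Icc (x - h) (x + h) ∈ nhds t :=
        Icc_mem_nhds (by linarith [ht.1, hy.1]) (by linarith [ht.2])
      exact ((hu t (hsub (Ioo_subset_Icc_self ht))).hasDerivAt hmem).hasDerivWithinAt
    have key : ∫ t in y..x, g t = u x - u y :=
      integral_eq_sub_of_hasDeriv_right_of_le hxy hcont hderiv hgi
    have hbi : IntervalIntegrable (fun t => A * (x - t) ^ k) MeasureTheory.volume y x :=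
      (Continuous.intervalIntegrable (by fun_prop) _ _)
    calc |u y| = |∫ t in y..x, g t| := by rw [key, hux, zero_sub, abs_neg]
      _ ≤ ∫ t in y..x, |g t| := abs_integral_le_integral_abs hxy
      _ ≤ ∫ t in y..x, A * (x - t) ^ k := by
          apply intervalIntegral.integral_mono_on hxy hgi.abs hbi
          intro t ht
          have := hb t (hsub ht)
          rwa [abs_sub_comm, abs_of_nonneg (by linarith [ht.2] : (0:ℝ) ≤ x - t)] at this
      _ = B * |y - x| ^ (k + 1) := by
          rw [intervalIntegral.integral_const_mul,
            intervalIntegral.integral_comp_sub_left (fun t => t ^ k) x, integral_pow,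
            abs_sub_comm, abs_of_nonneg (by linarith : (0:ℝ) ≤ x - y), hAB]
          have : (x - x : ℝ) ^ (k + 1) = 0 := by simp
          rw [this]
          field_simp
          ring
lemma taylor4 {w : ℝ → ℝ} {x h M : ℝ} (hh : 0 < h)
    (hw : ContDiffOn ℝ 4 w (Icc (x - h) (x + h)))
    (hM : ∀ y ∈ Icc (x - h) (x + h),
      |iteratedDerivWithin 4 w (Icc (x - h) (x + h)) y| ≤ M) :
    ∀ y ∈ Icc (x - h) (x + h),
      |w y - (w x + derivWithin w (Icc (x - h) (x + h)) x * (y - x)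
        + iteratedDerivWithin 2 w (Icc (x - h) (x + h)) x * (y - x) ^ 2 / 2
        + iteratedDerivWithin 3 w (Icc (x - h) (x + h)) x * (y - x) ^ 3 / 6)|
      ≤ M / 24 * (y - x) ^ 4 := by
  set s := Icc (x - h) (x + h) with hs_def
  have hs : UniqueDiffOn ℝ s := uniqueDiffOn_Icc (by linarith)
  have hx : x ∈ s := ⟨by linarith, by linarith⟩
  have hdiff : ∀ k : ℕ, k < 4 → DifferentiableOn ℝ (iteratedDerivWithin k w s) s := by
    intro k hk
    exact hw.differentiableOn_iteratedDerivWithin (by exact_mod_cast hk) hs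
  have hder : ∀ k : ℕ, k < 4 → ∀ y ∈ s,
      HasDerivWithinAt (iteratedDerivWithin k w s) (iteratedDerivWithin (k + 1) w s y) s y := by
    intro k hk y hy
    have := (hdiff k hk y hy).hasDerivWithinAt
    rwa [← iteratedDerivWithin_succ] at this
  set c1 := derivWithin w s x with hc1
  set c2 := iteratedDerivWithin 2 w s x with hc2
  set c3 := iteratedDerivWithin 3 w s x with hc3
  -- level 3
  have h3 : ∀ y ∈ s, |iteratedDerivWithin 3 w s y - c3| ≤ M * |y - x| ^ (0 + 1) := by
    apply step_bound hh _ (iteratedDerivWithin 4 w s) M M 0 (by push_cast; ring)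
    · intro y hy; exact (hder 3 (by norm_num) y hy).sub_const c3
    · exact hw.continuousOn_iteratedDerivWithin (by norm_num) hs
    · simp [hc3]
    · intro y hy; simpa using hM y hy
  -- level 2
  have h2 : ∀ y ∈ s, |iteratedDerivWithin 2 w s y - (c2 + c3 * (y - x))| ≤ M / 2 * |y - x| ^ (1 + 1) := by
    apply step_bound hh _ (fun y => iteratedDerivWithin 3 w s y - c3) M (M / 2) 1 (by push_cast; ring)
    · intro y hy
      have hp : HasDerivAt (fun t => c2 + c3 * (t - x)) c3 y := by
        simpa using (((hasDerivAt_id y).sub_const x).const_mul c3).const_add c2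
      exact (hder 2 (by norm_num) y hy).sub hp.hasDerivWithinAt
    · exact ((hdiff 3 (by norm_num)).continuousOn).sub continuousOn_const
    · simp [hc2]
    · intro y hy; simpa using h3 y hy
  -- level 1
  have h1 : ∀ y ∈ s, |iteratedDerivWithin 1 w s y - (c1 + c2 * (y - x) + c3 * (y - x) ^ 2 / 2)|
      ≤ M / 6 * |y - x| ^ (2 + 1) := by
    apply step_bound hh _ (fun y => iteratedDerivWithin 2 w s y - (c2 + c3 * (y - x))) (M / 2) (M / 6) 2
      (by push_cast; ring)
    · intro y hy
      have hp : HasDerivAt (fun t => c1 + c2 * (t - x) + c3 * (t - x) ^ 2 / 2)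
          (c2 + c3 * (y - x)) y := by
        have hid : HasDerivAt (fun t : ℝ => t - x) 1 y := (hasDerivAt_id y).sub_const x
        have hsq : HasDerivAt (fun t : ℝ => (t - x) ^ 2) (2 * (y - x)) y := by
          simpa using hid.fun_pow 2
        have := (((hid.const_mul c2).const_add c1).add ((hsq.const_mul c3).div_const 2))
        exact this.congr_deriv (by ring)
      exact (hder 1 (by norm_num) y hy).sub hp.hasDerivWithinAt
    · exact ((hdiff 2 (by norm_num)).continuousOn).sub (by fun_prop)
    · simp [iteratedDerivWithin_one, hc1]
    · intro y hy; simpa using h2 y hy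
  -- level 0
  have hw0 : iteratedDerivWithin 0 w s = w := iteratedDerivWithin_zero
  have h1' : derivWithin w s x = iteratedDerivWithin 1 w s x := (congrFun iteratedDerivWithin_one x).symm
  have h0 : ∀ y ∈ s, |w y - (w x + c1 * (y - x) + c2 * (y - x) ^ 2 / 2 + c3 * (y - x) ^ 3 / 6)|
      ≤ M / 24 * |y - x| ^ (3 + 1) := by
    apply step_bound hh _
      (fun y => iteratedDerivWithin 1 w s y - (c1 + c2 * (y - x) + c3 * (y - x) ^ 2 / 2))
      (M / 6) (M / 24) 3 (by push_cast; ring)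
    · intro y hy
      have hp : HasDerivAt (fun t => w x + c1 * (t - x) + c2 * (t - x) ^ 2 / 2 + c3 * (t - x) ^ 3 / 6)
          (c1 + c2 * (y - x) + c3 * (y - x) ^ 2 / 2) y := by
        have hid : HasDerivAt (fun t : ℝ => t - x) 1 y := (hasDerivAt_id y).sub_const x
        have hsq : HasDerivAt (fun t : ℝ => (t - x) ^ 2) (2 * (y - x)) y := by
          simpa using hid.fun_pow 2
        have hcb : HasDerivAt (fun t : ℝ => (t - x) ^ 3) (3 * (y - x) ^ 2) y := by
          simpa using hid.fun_pow 3
        have := ((((hid.const_mul c1).const_add (w x)).add ((hsq.const_mul c2).div_const 2)).add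
          ((hcb.const_mul c3).div_const 6))
        exact this.congr_deriv (by ring)
      have hw1 : HasDerivWithinAt w (iteratedDerivWithin 1 w s y) s y := by
        have := hder 0 (by norm_num) y hy
        rwa [hw0] at this
      exact hw1.sub hp.hasDerivWithinAt
    · exact ((hdiff 1 (by norm_num)).continuousOn).sub (by fun_prop)
    · simp [iteratedDerivWithin_one, hc1]
    · intro y hy
      have := h1 y hy
      simpa using this
  intro y hy
  have h := h0 y hy
  norm_num at h
  have habs : |y - x| ^ 4 = (y - x) ^ 4 := by
    rw [← abs_pow]; exact abs_of_nonneg (by positivity)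
  rw [habs] at h
  exact h


theorem stmt_8 :
    ∃ C > 0, ∀ (w : ℝ → ℝ) (x h M : ℝ), 0 < h →
      ContDiffOn ℝ 4 w (Set.Icc (x - h) (x + h)) →
      (∀ y ∈ Set.Icc (x - h) (x + h),
        |iteratedDerivWithin 4 w (Set.Icc (x - h) (x + h)) y| ≤ M) →
      |(1 / h) * (-(1 / 2) * ((1 / h) * ∫ y in (x - h)..x, w y) - 2 * w x
          + (7 / 2) * ((1 / h) * ∫ y in x..(x + h), w y) - w (x + h))
        - derivWithin w (Set.Icc (x - h) (x + h)) x| ≤ C * M * h ^ 3 := by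
  refine ⟨1, one_pos, ?_⟩
  intro w x h M hh hw hM
  set s := Icc (x - h) (x + h) with hs_def
  have hx : x ∈ s := ⟨by linarith, by linarith⟩
  have hxh : x + h ∈ s := ⟨by linarith, le_refl _⟩
  have hM0 : 0 ≤ M := le_trans (abs_nonneg _) (hM x hx)
  set c0 := w x with hc0
  set c1 := derivWithin w s x with hc1
  set c2 := iteratedDerivWithin 2 w s x with hc2
  set c3 := iteratedDerivWithin 3 w s x with hc3
  set P : ℝ → ℝ := fun y => c0 + c1 * (y - x) + c2 * (y - x) ^ 2 / 2 + c3 * (y - x) ^ 3 / 6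
    with hP
  have hT : ∀ y ∈ s, |w y - P y| ≤ M / 24 * (y - x) ^ 4 := taylor4 hh hw hM
  have hne : h ≠ 0 := ne_of_gt hh
  -- integral of monomials
  have hmono : ∀ (k : ℕ) (a b : ℝ), ∫ y in a..b, (y - x) ^ k
      = ((b - x) ^ (k + 1) - (a - x) ^ (k + 1)) / (k + 1) := by
    intro k a b
    rw [intervalIntegral.integral_comp_sub_right (fun t => t ^ k) x, integral_pow]
  -- integral of P
  have hIP : ∀ a b : ℝ, ∫ y in a..b, P y
      = c0 * (b - a) + c1 * ((b - x) ^ 2 - (a - x) ^ 2) / 2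
        + c2 * ((b - x) ^ 3 - (a - x) ^ 3) / 6 + c3 * ((b - x) ^ 4 - (a - x) ^ 4) / 24 := by
    intro a b
    have e : ∀ y : ℝ, P y = c0 * (y - x) ^ 0 + (c1 * (y - x) ^ 1
        + (c2 / 2 * (y - x) ^ 2 + c3 / 6 * (y - x) ^ 3)) := by
      intro y; simp only [hP]; ring
    rw [intervalIntegral.integral_congr (fun y _ => e y)]
    rw [intervalIntegral.integral_add (by apply Continuous.intervalIntegrable; fun_prop)
      (by apply Continuous.intervalIntegrable; fun_prop),
      intervalIntegral.integral_add (by apply Continuous.intervalIntegrable; fun_prop)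
      (by apply Continuous.intervalIntegrable; fun_prop),
      intervalIntegral.integral_add (by apply Continuous.intervalIntegrable; fun_prop)
      (by apply Continuous.intervalIntegrable; fun_prop)]
    rw [intervalIntegral.integral_const_mul, intervalIntegral.integral_const_mul,
      intervalIntegral.integral_const_mul, intervalIntegral.integral_const_mul,
      hmono 0 a b, hmono 1 a b, hmono 2 a b, hmono 3 a b]
    push_cast
    ring
  have hPc : Continuous P := by fun_prop
  have hwc : ContinuousOn w s := hw.continuousOn
  have hwi : ∀ a b : ℝ, a ∈ s → b ∈ s → IntervalIntegrable w MeasureTheory.volume a b := by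
    intro a b ha hb
    apply ContinuousOn.intervalIntegrable
    have hle : x - h ≤ x + h := by linarith
    have ha' : a ∈ uIcc (x - h) (x + h) := by rw [uIcc_of_le hle]; exact ha
    have hb' : b ∈ uIcc (x - h) (x + h) := by rw [uIcc_of_le hle]; exact hb
    refine hwc.mono ((uIcc_subset_uIcc ha' hb').trans ?_)
    rw [uIcc_of_le hle]
  have hxmh : x - h ∈ s := ⟨le_refl _, by linarith⟩
  -- remainders
  set r₁ : ℝ := ∫ y in (x - h)..x, (w y - P y) with hr₁
  set r₂ : ℝ := ∫ y in x..(x + h), (w y - P y) with hr₂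
  have e₁ : ∫ y in (x - h)..x, w y = (∫ y in (x - h)..x, P y) + r₁ := by
    rw [hr₁, intervalIntegral.integral_sub (hwi _ _ hxmh hx)
      (hPc.intervalIntegrable _ _)]
    ring
  have e₂ : ∫ y in x..(x + h), w y = (∫ y in x..(x + h), P y) + r₂ := by
    rw [hr₂, intervalIntegral.integral_sub (hwi _ _ hx hxh)
      (hPc.intervalIntegrable _ _)]
    ring
  have eb : w (x + h) = P (x + h) + (w (x + h) - P (x + h)) := by ring
  -- key algebraic identity
  have key : (1 / h) * (-(1 / 2) * ((1 / h) * ∫ y in (x - h)..x, w y) - 2 * w x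
        + (7 / 2) * ((1 / h) * ∫ y in x..(x + h), w y) - w (x + h)) - derivWithin w s x
      = (-(1 / 2) * r₁ + (7 / 2) * r₂) / h ^ 2 - (w (x + h) - P (x + h)) / h := by
    rw [e₁, e₂, hIP, hIP]
    rw [show derivWithin w s x = c1 from rfl, show w x = c0 from rfl, hP]
    field_simp
    ring
  rw [key]
  -- bounds on remainders
  have babs : ∀ a b : ℝ, a ≤ b → a ∈ s → b ∈ s →
      |∫ y in a..b, (w y - P y)| ≤ (M / 24) * (((b - x) ^ 5 - (a - x) ^ 5) / 5) := by
    intro a b hab ha hb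
    have hsub : Icc a b ⊆ s := Icc_subset_Icc ha.1 hb.2
    have hint : IntervalIntegrable (fun y => w y - P y) MeasureTheory.volume a b :=
      (hwi a b ha hb).sub (hPc.intervalIntegrable _ _)
    calc |∫ y in a..b, (w y - P y)| ≤ ∫ y in a..b, |w y - P y| :=
          abs_integral_le_integral_abs hab
      _ ≤ ∫ y in a..b, M / 24 * (y - x) ^ 4 := by
          apply intervalIntegral.integral_mono_on hab hint.abs
            (by apply Continuous.intervalIntegrable; fun_prop)
          intro t ht; exact hT t (hsub ht)
      _ = (M / 24) * (((b - x) ^ 5 - (a - x) ^ 5) / 5) := by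
          rw [intervalIntegral.integral_const_mul, hmono 4 a b]
          norm_num
  have b₁ : |r₁| ≤ M / 24 * (h ^ 5 / 5) := by
    have := babs (x - h) x (by linarith) hxmh hx
    rw [← hr₁] at this
    calc |r₁| ≤ (M / 24) * (((x - x) ^ 5 - (x - h - x) ^ 5) / 5) := this
      _ = M / 24 * (h ^ 5 / 5) := by ring
  have b₂ : |r₂| ≤ M / 24 * (h ^ 5 / 5) := by
    have := babs x (x + h) (by linarith) hx hxh
    rw [← hr₂] at this
    calc |r₂| ≤ (M / 24) * (((x + h - x) ^ 5 - (x - x) ^ 5) / 5) := this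
      _ = M / 24 * (h ^ 5 / 5) := by ring
  have bb : |w (x + h) - P (x + h)| ≤ M / 24 * h ^ 4 := by
    have := hT (x + h) hxh
    calc |w (x + h) - P (x + h)| ≤ M / 24 * (x + h - x) ^ 4 := this
      _ = M / 24 * h ^ 4 := by ring
  -- final estimate
  have h2pos : (0 : ℝ) < h ^ 2 := by positivity
  calc |(-(1 / 2) * r₁ + (7 / 2) * r₂) / h ^ 2 - (w (x + h) - P (x + h)) / h|
      ≤ |(-(1 / 2) * r₁ + (7 / 2) * r₂) / h ^ 2| + |(w (x + h) - P (x + h)) / h| :=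
        abs_sub _ _
    _ = |(-(1 / 2) * r₁ + (7 / 2) * r₂)| / h ^ 2 + |w (x + h) - P (x + h)| / h := by
        rw [abs_div, abs_div, abs_of_pos h2pos, abs_of_pos hh]
    _ ≤ ((1 / 2) * |r₁| + (7 / 2) * |r₂|) / h ^ 2 + |w (x + h) - P (x + h)| / h := by
        gcongr
        calc |(-(1 / 2) * r₁ + (7 / 2) * r₂)| ≤ |(-(1 / 2) * r₁)| + |(7 / 2) * r₂| := abs_add_le _ _
          _ = (1 / 2) * |r₁| + (7 / 2) * |r₂| := by
              rw [abs_mul, abs_mul]; norm_num [abs_of_pos]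
    _ ≤ ((1 / 2) * (M / 24 * (h ^ 5 / 5)) + (7 / 2) * (M / 24 * (h ^ 5 / 5))) / h ^ 2
        + (M / 24 * h ^ 4) / h := by gcongr
    _ = (3 / 40) * M * h ^ 3 := by field_simp; ring
    _ ≤ 1 * M * h ^ 3 := by nlinarith [pow_pos hh 3]
end

section
/- Let w be of class C³ on an interval containing [x, x+h], h > 0, and set w̄ = (1/h)∫_x^{x+h} w. Then the one-sided boundary operator D₀w = (1/h)(-4w(x) + 6w̄ - 2w(x+h)) satisfies |D₀w - w'(x)| ≤ C h², with C depending only on sup |w'''| on [x, x+h]. -/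
open intervalIntegral

theorem stmt_10 :
    ∃ C > 0, ∀ (w : ℝ → ℝ) (x h M : ℝ), 0 < h →
      ContDiffOn ℝ 3 w (Set.Icc x (x + h)) →
      (∀ y ∈ Set.Icc x (x + h),
        |iteratedDerivWithin 3 w (Set.Icc x (x + h)) y| ≤ M) →
      |(1 / h) * (-4 * w x + 6 * ((1 / h) * ∫ y in x..(x + h), w y) - 2 * w (x + h))
        - derivWithin w (Set.Icc x (x + h)) x| ≤ C * M * h ^ 2 := by
  refine ⟨4, by norm_num, ?_⟩
  intro w x h M hh hw hM
  have hxh : x ≤ x + h := by linarith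
  set I := Set.Icc x (x + h) with hI
  have hxI : x ∈ I := Set.left_mem_Icc.2 hxh
  have hM0 : 0 ≤ M := le_trans (abs_nonneg _) (hM x hxI)
  set a := w x with ha
  set b := derivWithin w I x with hb
  set c := iteratedDerivWithin 2 w I x with hc
  set P : ℝ → ℝ := fun y => a + b * (y - x) + c / 2 * (y - x) ^ 2 with hP
  have hud : UniqueDiffOn ℝ I := uniqueDiffOn_Icc (by linarith)
  have h1 : iteratedDerivWithin 1 w I x = b := congrFun iteratedDerivWithin_one x
  have htay : ∀ y : ℝ, taylorWithinEval w 2 I x y = P y := by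
    intro y
    rw [taylor_within_apply]
    simp [Finset.sum_range_succ, hP, h1, Nat.factorial]
    ring
  -- remainder bound
  have hE : ∀ y ∈ I, |w y - P y| ≤ M * (y - x) ^ 3 / 2 := by
    intro y hy
    have := taylor_mean_remainder_bound (n := 2) hxh hw hy
      (fun z hz => by simpa using hM z hz)
    rw [htay] at this
    simpa [Nat.factorial] using this
  -- integrability
  have hwc : ContinuousOn w I := hw.continuousOn
  have hwint : IntervalIntegrable w MeasureTheory.volume x (x + h) :=
    (hwc.mono (by rw [Set.uIcc_of_le hxh])).intervalIntegrable
  have hPcont : Continuous P := by fun_prop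
  have hPint : IntervalIntegrable P MeasureTheory.volume x (x + h) :=
    hPcont.intervalIntegrable x (x + h)
  -- integral of P
  have hmono : ∀ k : ℕ, (∫ y in x..(x + h), (y - x) ^ k) = h ^ (k + 1) / (k + 1) := by
    intro k
    rw [intervalIntegral.integral_comp_sub_right (fun t => t ^ k) x]
    simp [integral_pow]
  have hIP : (∫ y in x..(x + h), P y) = a * h + b * h ^ 2 / 2 + c * h ^ 3 / 6 := by
    have : (∫ y in x..(x + h), P y)
        = a * (∫ y in x..(x + h), (1:ℝ)) + b * (∫ y in x..(x + h), (y - x) ^ 1)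
          + c / 2 * (∫ y in x..(x + h), (y - x) ^ 2) := by
      rw [← intervalIntegral.integral_const_mul, ← intervalIntegral.integral_const_mul,
        ← intervalIntegral.integral_const_mul, ← intervalIntegral.integral_add,
        ← intervalIntegral.integral_add]
      · simp [hP]
      · exact ((continuous_const.mul continuous_const).add
          ((continuous_const.mul (by fun_prop))) ).intervalIntegrable x (x+h)
      · exact (continuous_const.mul (by fun_prop : Continuous fun y : ℝ => (y - x) ^ 2)).intervalIntegrable x (x+h)
      · exact (continuous_const.mul continuous_const).intervalIntegrable x (x+h)
      · exact (continuous_const.mul (by fun_prop : Continuous fun y : ℝ => (y - x) ^ 1)).intervalIntegrable x (x+h)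
    rw [this, hmono 1, hmono 2, integral_one]
    norm_num
    ring
  -- error integral bound
  have hIE : |(∫ y in x..(x + h), (w y - P y))| ≤ M * h ^ 3 / 2 * h := by
    have := intervalIntegral.norm_integral_le_of_norm_le_const
      (C := M * h ^ 3 / 2) (f := fun y => w y - P y) (a := x) (b := x + h) ?_
    · simpa [abs_of_pos hh] using this
    · intro y hy
      rw [Set.uIoc_of_le hxh] at hy
      have hyI : y ∈ I := ⟨le_of_lt hy.1, hy.2⟩
      refine le_trans (hE y hyI) ?_
      have h0 : 0 ≤ y - x := by linarith [hy.1]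
      have h1' : y - x ≤ h := by linarith [hy.2]
      have : (y - x) ^ 3 ≤ h ^ 3 := pow_le_pow_left₀ h0 h1' 3
      nlinarith
  have hEend : |w (x + h) - P (x + h)| ≤ M * h ^ 3 / 2 := by
    have := hE (x + h) (Set.right_mem_Icc.2 hxh)
    simpa using this
  -- split integral
  have hsplit : (∫ y in x..(x + h), w y)
      = (a * h + b * h ^ 2 / 2 + c * h ^ 3 / 6) + (∫ y in x..(x + h), (w y - P y)) := by
    rw [← hIP, ← intervalIntegral.integral_add hPint (hwint.sub hPint)]
    simp
  set E1 := w (x + h) - P (x + h) with hE1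
  set EI := (∫ y in x..(x + h), (w y - P y)) with hEI
  have hwend : w (x + h) = (a + b * h + c / 2 * h ^ 2) + E1 := by
    simp only [hE1, hP]; ring
  have key : (1 / h) * (-4 * a + 6 * ((1 / h) * ∫ y in x..(x + h), w y) - 2 * w (x + h)) - b
      = (6 * EI - 2 * h * E1) / h ^ 2 := by
    rw [hsplit, hwend]
    field_simp
    ring
  rw [key]
  rw [abs_div, abs_of_pos (by positivity : (0:ℝ) < h ^ 2)]
  rw [div_le_iff₀ (by positivity)]
  calc |6 * EI - 2 * h * E1| ≤ |6 * EI| + |2 * h * E1| := abs_sub _ _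
    _ = 6 * |EI| + 2 * h * |E1| := by
        rw [abs_mul, abs_mul, abs_mul, abs_of_pos hh]; norm_num
    _ ≤ 6 * (M * h ^ 3 / 2 * h) + 2 * h * (M * h ^ 3 / 2) := by
        gcongr
    _ ≤ 4 * M * h ^ 2 * h ^ 2 := by nlinarith
end

section
/- Let b(θ) = 2 + e^{-iθ} and suppose c₁ : ℝ → ℂ is continuous and bounded with |c₁(θ)| ≤ C₁ for all θ. Then there exists a continuous bounded function c₂ : ℝ → ℂ such that for all θ, (b(θ) - 2iθ + c₂(θ)θ⁵)² = (b(θ) - 2iθ)² + 4i c₁(θ)θ⁵, equivalently 2(b(θ) - 2iθ)c₂(θ) + c₂(θ)²θ⁵ = 4i c₁(θ); moreover c₂(θ) → 0 as |θ| → ∞. -/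
open Complex Filter

noncomputable def sq2 (w : ℂ) : ℂ := Complex.exp (Complex.log w / 2)

lemma sq2_sq {w : ℂ} (hw : w ≠ 0) : sq2 w ^ 2 = w := by
  rw [sq2, ← Complex.exp_nat_mul]
  push_cast
  rw [mul_div_cancel₀ _ (two_ne_zero), Complex.exp_log hw]

lemma sq2_one : sq2 1 = 1 := by simp [sq2]

lemma sq2_continuousAt {α : Type*} [TopologicalSpace α] {u : α → ℂ} {x : α}
    (hu : ContinuousAt u x) (hw : u x ∈ Complex.slitPlane) :
    ContinuousAt (fun y => sq2 (u y)) x := by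
  unfold sq2
  exact Complex.continuous_exp.continuousAt.comp
    (((continuousAt_clog hw).comp hu).div_const 2)

lemma mem_slitPlane_of_near_one {w : ℂ} (hw : ‖w - 1‖ < 1) :
    w ∈ Complex.slitPlane := by
  rw [Complex.mem_slitPlane_iff]
  left
  have h1 : |(w - 1).re| ≤ ‖w - 1‖ := Complex.abs_re_le_norm _
  have : (w - 1).re = w.re - 1 := by simp
  have := abs_le.1 h1
  linarith [this.1]

lemma lift_Icc (f : ℝ → ℂ) (hf : Continuous f) {a b : ℝ} (hab : a ≤ b)
    (hne : ∀ x ∈ Set.Icc a b, f x ≠ 0) (z : ℂ) (hz : z ^ 2 = f a) :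
    ∃ g : ℝ → ℂ, ContinuousOn g (Set.Icc a b) ∧ (∀ x ∈ Set.Icc a b, g x ^ 2 = f x)
      ∧ g a = z := by
  -- minimum of |f| on the interval
  obtain ⟨xm, hxm, hmin⟩ := isCompact_Icc.exists_isMinOn (Set.nonempty_Icc.2 hab)
    hf.norm.continuousOn
  set m : ℝ := ‖f xm‖ with hm
  have hm0 : 0 < m := by
    have := hne xm hxm
    simpa [hm] using (norm_pos_iff.mpr this)
  -- uniform continuity
  have huc : UniformContinuousOn f (Set.Icc a b) :=
    isCompact_Icc.uniformContinuousOn_of_continuous hf.continuousOn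
  rw [Metric.uniformContinuousOn_iff] at huc
  obtain ⟨δ, hδ0, hδ⟩ := huc m hm0
  -- choose n
  obtain ⟨n0, hn0⟩ := exists_nat_gt ((b - a) / δ)
  set n : ℕ := n0 + 1
  have hn1 : 1 ≤ (n : ℝ) := by exact_mod_cast Nat.one_le_iff_ne_zero.2 (by simp [n])
  have hnpos : (0:ℝ) < n := by linarith
  have hstep : (b - a) / n < δ := by
    rw [div_lt_iff₀ hnpos]
    have hba : (b - a) / δ < n := lt_of_lt_of_le hn0 (by exact_mod_cast Nat.le_succ n0)
    have : b - a < n * δ := (div_lt_iff₀ hδ0).1 hba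
    linarith
  set h : ℝ := (b - a) / n with hh
  have hh0 : 0 ≤ h := div_nonneg (by linarith) (le_of_lt hnpos)
  set t : ℕ → ℝ := fun k => a + k * h with ht
  have htmono : ∀ k : ℕ, t k ≤ t (k+1) := by
    intro k; simp only [ht]; push_cast; nlinarith
  have htb : ∀ k : ℕ, k ≤ n → t k ∈ Set.Icc a b := by
    intro k hk
    constructor
    · simp only [ht]; nlinarith [mul_nonneg (Nat.cast_nonneg (α := ℝ) k) hh0]
    · simp only [ht, hh]
      have : (k:ℝ) ≤ n := by exact_mod_cast hk
      have h2 : (k:ℝ) * ((b-a)/n) ≤ n * ((b-a)/n) := mul_le_mul_of_nonneg_right this hh0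
      have : (n:ℝ) * ((b-a)/n) = b - a := by field_simp
      linarith
  have main : ∀ k : ℕ, k ≤ n → ∃ g : ℝ → ℂ, ContinuousOn g (Set.Icc a (t k)) ∧
      (∀ x ∈ Set.Icc a (t k), g x ^ 2 = f x) ∧ g a = z := by
    intro k hk
    induction k with
    | zero =>
      refine ⟨fun _ => z, continuousOn_const, ?_, rfl⟩
      intro x hx
      have : x = a := le_antisymm (by simpa [ht] using hx.2) hx.1
      rw [this, hz]
    | succ k ih =>
      obtain ⟨g, hgc, hgs, hga⟩ := ih (le_trans (Nat.le_succ k) hk)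
      have hkn : k ≤ n := le_trans (Nat.le_succ k) hk
      have htk : t k ∈ Set.Icc a b := htb k hkn
      have htk1 : t (k+1) ∈ Set.Icc a b := htb (k+1) hk
      have hfk : f (t k) ≠ 0 := hne _ htk
      -- for x in [a, t(k+1)], the ratio is near 1
      have hratio : ∀ x ∈ Set.Icc a (t (k+1)),
          f (max x (t k)) / f (t k) ∈ Complex.slitPlane := by
        intro x hx
        apply mem_slitPlane_of_near_one
        have hmx : max x (t k) ∈ Set.Icc a b := by
          constructor
          · exact le_max_of_le_right htk.1
          · exact max_le (le_trans hx.2 htk1.2) htk.2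
        have hd : dist (max x (t k)) (t k) < δ := by
          rw [Real.dist_eq, abs_sub_lt_iff]
          constructor
          · rcases le_or_gt x (t k) with hc | hc
            · simp [max_eq_right hc]; linarith
            · rw [max_eq_left hc.le]
              have : x ≤ t (k+1) := hx.2
              have : t (k+1) - t k = h := by simp [ht]; push_cast; ring
              have := hx.2
              have hxk : x - t k ≤ h := by
                have : t (k+1) = t k + h := by simp [ht]; push_cast; ring
                linarith [hx.2]
              linarith
          · have : t k ≤ max x (t k) := le_max_right _ _
            linarith
        have := hδ _ hmx _ htk hd
        rw [Complex.dist_eq] at this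
        have habs : ‖f (max x (t k)) / f (t k) - 1‖
            = ‖f (max x (t k)) - f (t k)‖ / ‖f (t k)‖ := by
          rw [← norm_div]
          congr 1
          field_simp
        rw [habs]
        rw [div_lt_one (norm_pos_iff.mpr hfk)]
        calc ‖f (max x (t k)) - f (t k)‖ < m := this
        _ ≤ ‖f (t k)‖ := hmin htk
      refine ⟨fun x => g (min x (t k)) * sq2 (f (max x (t k)) / f (t k)), ?_, ?_, ?_⟩
      · apply ContinuousOn.mul
        · apply hgc.comp ((continuous_id.min continuous_const).continuousOn)
          intro x hx
          exact ⟨le_min hx.1 htk.1, min_le_right _ _⟩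
        · intro x hx
          apply ContinuousAt.continuousWithinAt
          have hinner : ContinuousAt (fun y : ℝ => f (max y (t k)) / f (t k)) x :=
            ((hf.comp (continuous_id.max continuous_const)).div_const _).continuousAt
          exact sq2_continuousAt hinner (hratio x hx)
      · intro x hx
        rcases le_total x (t k) with hc | hc
        · simp only [min_eq_left hc, max_eq_right hc, div_self hfk, sq2_one, mul_one]
          exact hgs x ⟨hx.1, hc⟩
        · simp only [min_eq_right hc, max_eq_left hc]
          have hsl := hratio x hx
          have hne' : f x / f (t k) ≠ 0 := by
            apply div_ne_zero _ hfk
            apply hne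
            exact ⟨le_trans htk.1 hc, le_trans hx.2 htk1.2⟩
          rw [mul_pow, sq2_sq hne', hgs (t k) ⟨htk.1, le_refl _⟩]
          field_simp
      · have hak : a ≤ t k := htk.1
        simp [min_eq_left hak, max_eq_right hak, div_self hfk, sq2_one, hga]
  obtain ⟨g, hgc, hgs, hga⟩ := main n (le_refl n)
  have htn : t n = b := by
    simp only [ht, hh]
    field_simp
    ring
  rw [htn] at hgc hgs
  exact ⟨g, hgc, hgs, hga⟩

lemma lift_Icc_right (f : ℝ → ℂ) (hf : Continuous f) {a b : ℝ} (hab : a ≤ b)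
    (hne : ∀ x ∈ Set.Icc a b, f x ≠ 0) (z : ℂ) (hz : z ^ 2 = f b) :
    ∃ g : ℝ → ℂ, ContinuousOn g (Set.Icc a b) ∧ (∀ x ∈ Set.Icc a b, g x ^ 2 = f x)
      ∧ g b = z := by
  have hmem : ∀ x : ℝ, x ∈ Set.Icc (-b) (-a) → -x ∈ Set.Icc a b := by
    intro x hx
    exact ⟨by linarith [hx.2], by linarith [hx.1]⟩
  obtain ⟨g, hgc, hgs, hga⟩ := lift_Icc (fun x => f (-x)) (hf.comp continuous_neg)
    (neg_le_neg hab) (fun x hx => hne (-x) (hmem x hx)) z (by simpa using hz)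
  refine ⟨fun x => g (-x), ?_, ?_, by simpa using hga⟩
  · apply hgc.comp continuous_neg.continuousOn
    intro x hx
    simp only [Set.mem_Icc]
    exact ⟨by linarith [hx.2], by linarith [hx.1]⟩
  · intro x hx
    have := hgs (-x) ⟨by linarith [hx.2], by linarith [hx.1]⟩
    simpa using this

lemma lift_Icc_mid (f : ℝ → ℂ) (hf : Continuous f) {c d x₀ : ℝ} (hc : c ≤ x₀) (hd : x₀ ≤ d)
    (hne : ∀ x ∈ Set.Icc c d, f x ≠ 0) (z : ℂ) (hz : z ^ 2 = f x₀) :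
    ∃ g : ℝ → ℂ, ContinuousOn g (Set.Icc c d) ∧ (∀ x ∈ Set.Icc c d, g x ^ 2 = f x)
      ∧ g x₀ = z := by
  have hx₀ : x₀ ∈ Set.Icc c d := ⟨hc, hd⟩
  have hz0 : z ≠ 0 := by
    intro h
    exact hne x₀ hx₀ (by rw [← hz, h]; ring)
  obtain ⟨g₁, hg₁c, hg₁s, hg₁⟩ := lift_Icc_right f hf hc
    (fun x hx => hne x ⟨hx.1, le_trans hx.2 hd⟩) z hz
  obtain ⟨g₂, hg₂c, hg₂s, hg₂⟩ := lift_Icc f hf hd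
    (fun x hx => hne x ⟨le_trans hc hx.1, hx.2⟩) z hz
  refine ⟨fun t => g₁ (min t x₀) * g₂ (max t x₀) / z, ?_, ?_, ?_⟩
  · apply ContinuousOn.div_const
    apply ContinuousOn.mul
    · apply hg₁c.comp ((continuous_id.min continuous_const).continuousOn)
      intro x hx
      exact ⟨le_min hx.1 hc, min_le_right _ _⟩
    · apply hg₂c.comp ((continuous_id.max continuous_const).continuousOn)
      intro x hx
      exact ⟨le_max_right _ _, max_le hx.2 hd⟩
  · intro x hx
    rcases le_total x x₀ with hcc | hcc
    · show (g₁ (min x x₀) * g₂ (max x x₀) / z) ^ 2 = f x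
      rw [min_eq_left hcc, max_eq_right hcc, hg₂]
      rw [div_pow, mul_pow, hz, hg₁s x ⟨hx.1, hcc⟩, mul_div_assoc,
        div_self (hne x₀ hx₀), mul_one]
    · show (g₁ (min x x₀) * g₂ (max x x₀) / z) ^ 2 = f x
      rw [min_eq_right hcc, max_eq_left hcc, hg₁]
      rw [div_pow, mul_pow, hz, hg₂s x ⟨hcc, hx.2⟩, mul_comm, mul_div_assoc,
        div_self (hne x₀ hx₀), mul_one]
  · show g₁ (min x₀ x₀) * g₂ (max x₀ x₀) / z = z
    rw [min_self, max_self, hg₁, hg₂, mul_div_assoc, div_self hz0, mul_one]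

lemma sqrt_unique (f : ℝ → ℂ) {s : Set ℝ} (hs : IsPreconnected s) {g₁ g₂ : ℝ → ℂ}
    (h₁ : ContinuousOn g₁ s) (h₂ : ContinuousOn g₂ s)
    (sq₁ : ∀ x ∈ s, g₁ x ^ 2 = f x) (sq₂ : ∀ x ∈ s, g₂ x ^ 2 = f x)
    (hne : ∀ x ∈ s, f x ≠ 0) {x₀ : ℝ} (hx₀ : x₀ ∈ s) (heq : g₁ x₀ = g₂ x₀) :
    ∀ y ∈ s, g₁ y = g₂ y := by
  have hg₂ne : ∀ x ∈ s, g₂ x ≠ 0 := by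
    intro x hx h
    exact hne x hx (by rw [← sq₂ x hx, h]; ring)
  have halt : ∀ x ∈ s, g₁ x = g₂ x ∨ g₁ x = -g₂ x := by
    intro x hx
    have hmul : (g₁ x - g₂ x) * (g₁ x + g₂ x) = 0 := by
      have := (sq₁ x hx).trans (sq₂ x hx).symm
      linear_combination this
    rcases mul_eq_zero.1 hmul with h | h
    · left; linear_combination h
    · right; linear_combination h
  intro y hy
  by_contra hne'
  have hyneg : g₁ y = -g₂ y := (halt y hy).resolve_left hne'
  set σ : ℝ → ℝ := fun x => (g₁ x / g₂ x).re with hσ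
  have hσc : ContinuousOn σ s :=
    Complex.continuous_re.comp_continuousOn (h₁.div h₂ hg₂ne)
  have hσx₀ : σ x₀ = 1 := by
    simp only [hσ, heq, div_self (hg₂ne x₀ hx₀), Complex.one_re]
  have hσy : σ y = -1 := by
    simp only [hσ, hyneg, neg_div, div_self (hg₂ne y hy)]
    simp
  have hIvt := hs.intermediate_value hy hx₀ hσc
  have h0 : (0:ℝ) ∈ Set.Icc (σ y) (σ x₀) := by
    rw [hσy, hσx₀]; constructor <;> norm_num
  obtain ⟨x, hx, hx0⟩ := hIvt h0
  rcases halt x hx with h | h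
  · have hone : σ x = 1 := by
      simp only [hσ, h, div_self (hg₂ne x hx), Complex.one_re]
    rw [hx0] at hone; norm_num at hone
  · have hone : σ x = -1 := by
      simp only [hσ, h, neg_div, div_self (hg₂ne x hx)]
      simp
    rw [hx0] at hone; norm_num at hone

lemma lift_component (f : ℝ → ℂ) (hf : Continuous f) {U : Set ℝ} (hU : IsOpen U)
    (hUne : ∀ x ∈ U, f x ≠ 0) {x₀ : ℝ} (hx₀ : x₀ ∈ U) :
    ∃ g : ℝ → ℂ, ContinuousOn g (connectedComponentIn U x₀) ∧
      ∀ y ∈ connectedComponentIn U x₀, g y ^ 2 = f y := by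
  set V := connectedComponentIn U x₀ with hV
  have hVx₀ : x₀ ∈ V := mem_connectedComponentIn hx₀
  have hVU : V ⊆ U := connectedComponentIn_subset U x₀
  have hVopen : IsOpen V := hU.connectedComponentIn
  have hVpre : IsPreconnected V := isPreconnected_connectedComponentIn
  have hVord : Set.OrdConnected V := hVpre.ordConnected
  set z₀ : ℂ := sq2 (f x₀) with hz₀
  have hz₀sq : z₀ ^ 2 = f x₀ := sq2_sq (hUne x₀ hx₀)
  set Q : ℝ → (ℝ → ℂ) → Prop := fun y gg =>
    ContinuousOn gg (Set.uIcc x₀ y) ∧ (∀ x ∈ Set.uIcc x₀ y, gg x ^ 2 = f x) ∧ gg x₀ = z₀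
    with hQdef
  have huIccIcc : ∀ y : ℝ, Set.uIcc x₀ y = Set.Icc (min x₀ y) (max x₀ y) := fun y => rfl
  have hQex : ∀ y : ℝ, Set.uIcc x₀ y ⊆ V → ∃ gg, Q y gg := by
    intro y hsub
    obtain ⟨gg, hc, hsq, hanch⟩ := lift_Icc_mid f hf (min_le_left x₀ y) (le_max_left x₀ y)
      (fun x hx => hUne x (hVU (hsub (by rw [huIccIcc]; exact hx)))) z₀ hz₀sq
    refine ⟨gg, ?_, ?_, hanch⟩
    · rw [huIccIcc]; exact hc
    · intro x hx; exact hsq x (by rw [huIccIcc] at hx; exact hx)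
  classical
  set G : ℝ → ℂ := fun y => if h : ∃ gg, Q y gg then h.choose y else 0 with hG
  have hGeq : ∀ y' : ℝ, Set.uIcc x₀ y' ⊆ V → ∀ g' : ℝ → ℂ, Q y' g' → G y' = g' y' := by
    intro y' hsub g' hg'
    have hh := hQex y' hsub
    have hGy : G y' = hh.choose y' := by simp only [hG, dif_pos hh]
    rw [hGy]
    have hspec := hh.choose_spec
    exact sqrt_unique f isPreconnected_uIcc hspec.1 hg'.1 hspec.2.1 hg'.2.1
      (fun x hx => hUne x (hVU (hsub hx))) Set.left_mem_uIcc
      (hspec.2.2.trans hg'.2.2.symm) y' Set.right_mem_uIcc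
  refine ⟨G, ?_, ?_⟩
  · intro y hy
    obtain ⟨δ, hδ0, hball⟩ := Metric.isOpen_iff.1 hVopen y hy
    set c := min x₀ (y - δ/2) with hcdef
    set d := max x₀ (y + δ/2) with hddef
    have hcx₀ : c ≤ x₀ := min_le_left _ _
    have hx₀d : x₀ ≤ d := le_max_left _ _
    have hyl : y - δ/2 ∈ V := by
      apply hball
      rw [Metric.mem_ball, Real.dist_eq]
      rw [_root_.abs_of_nonpos (by linarith)]
      linarith
    have hyr : y + δ/2 ∈ V := by
      apply hball
      rw [Metric.mem_ball, Real.dist_eq]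
      rw [_root_.abs_of_nonneg (by linarith)]
      linarith
    have hJV : Set.Icc c d ⊆ V := by
      intro t ht
      rcases le_total t x₀ with hcc | hcc
      · refine hVord.uIcc_subset hVx₀ hyl ?_
        rw [Set.mem_uIcc]
        rcases le_total x₀ (y - δ/2) with h' | h'
        · left
          constructor
          · have : c = x₀ := min_eq_left h'
            linarith [ht.1]
          · linarith
        · right
          constructor
          · have : c = y - δ/2 := min_eq_right h'
            linarith [ht.1]
          · exact hcc
      · refine hVord.uIcc_subset hVx₀ hyr ?_
        rw [Set.mem_uIcc]
        rcases le_total x₀ (y + δ/2) with h' | h'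
        · left
          constructor
          · exact hcc
          · have : d = y + δ/2 := max_eq_right h'
            linarith [ht.2]
        · right
          constructor
          · linarith
          · have : d = x₀ := max_eq_left h'
            linarith [ht.2]
    obtain ⟨gJ, hJc, hJs, hJanch⟩ := lift_Icc_mid f hf hcx₀ hx₀d
      (fun x hx => hUne x (hVU (hJV hx))) z₀ hz₀sq
    have hballJ : Metric.ball y (δ/2) ⊆ Set.Icc c d := by
      intro y' hy'
      rw [Metric.mem_ball, Real.dist_eq, abs_sub_lt_iff] at hy'
      constructor
      · have : c ≤ y - δ/2 := min_le_right _ _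
        linarith [hy'.2]
      · have : y + δ/2 ≤ d := le_max_right _ _
        linarith [hy'.1]
    have hGgJ : ∀ y' ∈ Metric.ball y (δ/2), G y' = gJ y' := by
      intro y' hy'
      have hy'J : y' ∈ Set.Icc c d := hballJ hy'
      have hsub' : Set.uIcc x₀ y' ⊆ Set.Icc c d := by
        rw [huIccIcc]
        apply Set.Icc_subset_Icc
        · exact le_min hcx₀ hy'J.1
        · exact max_le hx₀d hy'J.2
      have hQ' : Q y' gJ := by
        refine ⟨hJc.mono hsub', fun x hx => hJs x (hsub' hx), ?_⟩
        exact hJanch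
      exact hGeq y' (hsub'.trans hJV) gJ hQ'
    have hmem : Metric.ball y (δ/2) ∈ nhds y := Metric.ball_mem_nhds y (by linarith)
    have hgJat : ContinuousAt gJ y :=
      hJc.continuousAt (Filter.mem_of_superset hmem hballJ)
    have : ContinuousAt G y := by
      apply hgJat.congr
      apply Filter.eventuallyEq_of_mem hmem
      intro y' hy'
      exact (hGgJ y' hy').symm
    exact this.continuousWithinAt
  · intro y hy
    have hsub : Set.uIcc x₀ y ⊆ V := hVord.uIcc_subset hVx₀ hy
    have hh := hQex y hsub
    have hGy : G y = hh.choose y := by simp only [hG, dif_pos hh]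
    rw [hGy]
    exact hh.choose_spec.2.1 y Set.right_mem_uIcc

lemma exists_cont_sqrt (f : ℝ → ℂ) (hf : Continuous f) :
    ∃ g : ℝ → ℂ, Continuous g ∧ ∀ x : ℝ, g x ^ 2 = f x := by
  classical
  set U : Set ℝ := {x | f x ≠ 0} with hUdef
  have hU : IsOpen U := isOpen_compl_singleton.preimage hf
  have hUne : ∀ x ∈ U, f x ≠ 0 := fun x hx => hx
  set P : Set ℝ → (ℝ → ℂ) := fun V =>
    if h : ∃ gg : ℝ → ℂ, ContinuousOn gg V ∧ ∀ y ∈ V, gg y ^ 2 = f y then h.choose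
    else fun _ => 0 with hP
  set g : ℝ → ℂ := fun x => if f x = 0 then 0 else P (connectedComponentIn U x) x with hg
  have hPprop : ∀ x ∈ U, ContinuousOn (P (connectedComponentIn U x)) (connectedComponentIn U x)
      ∧ ∀ y ∈ connectedComponentIn U x, (P (connectedComponentIn U x)) y ^ 2 = f y := by
    intro x hx
    have hex : ∃ gg : ℝ → ℂ, ContinuousOn gg (connectedComponentIn U x) ∧
        ∀ y ∈ connectedComponentIn U x, gg y ^ 2 = f y :=
      lift_component f hf hU hUne hx
    simp only [hP, dif_pos hex]
    exact hex.choose_spec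
  have hsq : ∀ x : ℝ, g x ^ 2 = f x := by
    intro x
    by_cases hx : f x = 0
    · simp [hg, hx]
    · have hxU : x ∈ U := hx
      have := (hPprop x hxU).2 x (mem_connectedComponentIn hxU)
      simpa [hg, hx] using this
  refine ⟨g, ?_, hsq⟩
  rw [continuous_iff_continuousAt]
  intro x
  by_cases hx : f x = 0
  · have hgx : g x = 0 := by simp [hg, hx]
    rw [ContinuousAt, hgx]
    rw [tendsto_zero_iff_norm_tendsto_zero]
    have hnorm : ∀ y : ℝ, ‖g y‖ = Real.sqrt ‖f y‖ := by
      intro y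
      have h1 : ‖g y‖ ^ 2 = ‖f y‖ := by
        rw [← norm_pow, hsq y]
      rw [← h1, Real.sqrt_sq (norm_nonneg _)]
    have : (fun y => ‖g y‖) = fun y => Real.sqrt ‖f y‖ := funext hnorm
    rw [this]
    have hcont : ContinuousAt (fun y => Real.sqrt ‖f y‖) x :=
      (Real.continuous_sqrt.comp hf.norm).continuousAt
    have hval : Real.sqrt ‖f x‖ = 0 := by simp [hx]
    rw [← hval]
    exact hcont
  · have hxU : x ∈ U := hx
    set V := connectedComponentIn U x with hV
    have hVopen : IsOpen V := hU.connectedComponentIn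
    have hVmem : x ∈ V := mem_connectedComponentIn hxU
    have hVnhds : V ∈ nhds x := hVopen.mem_nhds hVmem
    have heq : ∀ y ∈ V, g y = P V y := by
      intro y hy
      have hyU : y ∈ U := connectedComponentIn_subset U x hy
      have hcomp : connectedComponentIn U y = V := (connectedComponentIn_eq hy).symm
      simp only [hg, if_neg (show ¬ f y = 0 from hyU), hcomp]
    have hPc : ContinuousAt (P V) x := (hPprop x hxU).1.continuousAt hVnhds
    apply hPc.congr
    apply Filter.eventuallyEq_of_mem hVnhds
    intro y hy
    exact (heq y hy).symm

theorem stmt_12 (b : ℝ → ℂ) (hb : ∀ θ : ℝ, b θ = 2 + Complex.exp (-(Complex.I * θ)))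
    (c₁ : ℝ → ℂ) (hc₁ : Continuous c₁) (C₁ : ℝ)
    (hC₁ : ∀ θ : ℝ, ‖c₁ θ‖ ≤ C₁) :
    ∃ c₂ : ℝ → ℂ, Continuous c₂ ∧ (∃ C₂ : ℝ, ∀ θ : ℝ, ‖c₂ θ‖ ≤ C₂) ∧
      (∀ θ : ℝ,
        (b θ - 2 * Complex.I * θ + c₂ θ * (θ : ℂ) ^ 5) ^ 2
          = (b θ - 2 * Complex.I * θ) ^ 2 + 4 * Complex.I * c₁ θ * (θ : ℂ) ^ 5) ∧
      (∀ θ : ℝ,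
        2 * (b θ - 2 * Complex.I * θ) * c₂ θ + (c₂ θ) ^ 2 * (θ : ℂ) ^ 5
          = 4 * Complex.I * c₁ θ) ∧
      Tendsto c₂ (cocompact ℝ) (nhds 0) := by
  classical
  have hbc : Continuous b := by
    have hbf : b = fun θ : ℝ => 2 + Complex.exp (-(Complex.I * θ)) := funext hb
    rw [hbf]
    exact continuous_const.add
      (Complex.continuous_exp.comp ((continuous_const.mul Complex.continuous_ofReal).neg))
  set A : ℝ → ℂ := fun θ => b θ - 2 * Complex.I * θ with hA
  have hAc : Continuous A := hbc.sub ((continuous_const.mul Complex.continuous_ofReal))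
  set D : ℝ → ℂ := fun θ => A θ ^ 2 + 4 * Complex.I * c₁ θ * (θ : ℂ) ^ 5 with hD
  have hDc : Continuous D :=
    (hAc.pow 2).add ((continuous_const.mul hc₁).mul (Complex.continuous_ofReal.pow 5))
  obtain ⟨g0, hg0c, hg0sq⟩ := exists_cont_sqrt D hDc
  have hA0 : A 0 = 3 := by
    simp only [hA, hb 0]
    push_cast
    simp [Complex.exp_zero]
    norm_num
  have hD0 : D 0 = 9 := by
    simp only [hD, hA0]
    push_cast
    norm_num
  have hg00 : g0 0 = 3 ∨ g0 0 = -3 := by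
    have h9 : g0 0 ^ 2 = 9 := by rw [hg0sq 0, hD0]
    have hmul : (g0 0 - 3) * (g0 0 + 3) = 0 := by linear_combination h9
    rcases mul_eq_zero.1 hmul with h | h
    · left; linear_combination h
    · right; linear_combination h
  set g : ℝ → ℂ := if g0 0 = 3 then g0 else fun x => -g0 x with hgdef
  have hgc : Continuous g := by
    by_cases h : g0 0 = 3
    · simp only [hgdef, if_pos h]; exact hg0c
    · simp only [hgdef, if_neg h]; exact hg0c.neg
  have hgsq : ∀ θ : ℝ, g θ ^ 2 = D θ := by
    intro θ
    by_cases h : g0 0 = 3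
    · simp only [hgdef, if_pos h]; exact hg0sq θ
    · simp only [hgdef, if_neg h]
      have := hg0sq θ
      linear_combination this
  have hg3 : g 0 = 3 := by
    by_cases h : g0 0 = 3
    · simp only [hgdef, if_pos h]; exact h
    · simp only [hgdef, if_neg h]
      have h' : g0 0 = -3 := hg00.resolve_left h
      rw [h']; ring
  set c₂ : ℝ → ℂ := fun θ => if θ = 0 then (2/3) * Complex.I * c₁ 0
    else (g θ - A θ) / (θ : ℂ) ^ 5 with hc₂def
  have hθ5 : ∀ θ : ℝ, θ ≠ 0 → ((θ : ℂ) ^ 5) ≠ 0 :=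
    fun θ h => pow_ne_zero 5 (Complex.ofReal_ne_zero.2 h)
  have hval : ∀ θ : ℝ, θ ≠ 0 → c₂ θ * (θ : ℂ) ^ 5 = g θ - A θ := by
    intro θ hθ
    simp only [hc₂def, if_neg hθ]
    exact div_mul_cancel₀ _ (hθ5 θ hθ)
  -- first identity
  have hfirst : ∀ θ : ℝ, (A θ + c₂ θ * (θ : ℂ) ^ 5) ^ 2
      = A θ ^ 2 + 4 * Complex.I * c₁ θ * (θ : ℂ) ^ 5 := by
    intro θ
    by_cases hθ : θ = 0
    · subst hθ
      push_cast
      ring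
    · have h1 := hval θ hθ
      have h2 : (A θ + c₂ θ * (θ : ℂ) ^ 5) ^ 2 = g θ ^ 2 := by rw [h1]; ring
      rw [h2, hgsq θ]
  -- second identity
  have hsecond : ∀ θ : ℝ, 2 * A θ * c₂ θ + (c₂ θ) ^ 2 * (θ : ℂ) ^ 5
      = 4 * Complex.I * c₁ θ := by
    intro θ
    by_cases hθ : θ = 0
    · subst hθ
      have hcv : c₂ 0 = (2/3) * Complex.I * c₁ 0 := by simp [hc₂def]
      rw [hcv, hA0]
      push_cast
      ring
    · have h2 : (2 * A θ * c₂ θ + (c₂ θ) ^ 2 * (θ : ℂ) ^ 5 - 4 * Complex.I * c₁ θ)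
          * (θ : ℂ) ^ 5 = 0 := by linear_combination hfirst θ
      rcases mul_eq_zero.1 h2 with h | h
      · linear_combination h
      · exact absurd h (hθ5 θ hθ)
  -- continuity of c₂
  have hc₂c : Continuous c₂ := by
    rw [continuous_iff_continuousAt]
    intro θ
    by_cases hθ : θ = 0
    · subst hθ
      have hden : g 0 + A 0 = 6 := by rw [hg3, hA0]; norm_num
      have hden' : g 0 + A 0 ≠ 0 := by rw [hden]; norm_num
      have hcontA : ContinuousAt (fun t => 4 * Complex.I * c₁ t / (g t + A t)) 0 :=
        ContinuousAt.div ((continuous_const.mul hc₁).continuousAt)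
          ((hgc.add hAc).continuousAt) hden'
      have hNopen : IsOpen {t : ℝ | g t + A t ≠ 0} :=
        isOpen_compl_singleton.preimage (hgc.add hAc)
      have hNmem : {t : ℝ | g t + A t ≠ 0} ∈ nhds (0 : ℝ) :=
        hNopen.mem_nhds hden'
      apply hcontA.congr
      apply Filter.eventuallyEq_of_mem hNmem
      intro t ht
      show 4 * Complex.I * c₁ t / (g t + A t) = c₂ t
      by_cases ht0 : t = 0
      · subst ht0
        rw [hden]
        simp only [hc₂def, if_pos rfl]
        field_simp
        ring
      · simp only [hc₂def, if_neg ht0]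
        rw [div_eq_div_iff ht (hθ5 t ht0)]
        have hsq := hgsq t
        simp only [hD] at hsq
        linear_combination -hsq
    · have hUopen : IsOpen {t : ℝ | t ≠ 0} := isOpen_compl_singleton
      have hUmem : {t : ℝ | t ≠ 0} ∈ nhds θ := hUopen.mem_nhds hθ
      have hcontA : ContinuousAt (fun t : ℝ => (g t - A t) / (t : ℂ) ^ 5) θ :=
        ContinuousAt.div ((hgc.sub hAc).continuousAt)
          ((Complex.continuous_ofReal.pow 5).continuousAt) (hθ5 θ hθ)
      apply hcontA.congr
      apply Filter.eventuallyEq_of_mem hUmem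
      intro t ht
      show (g t - A t) / (t : ℂ) ^ 5 = c₂ t
      simp only [hc₂def, if_neg ht]
  -- decay bound
  have hC₁0 : 0 ≤ C₁ := le_trans (norm_nonneg _) (hC₁ 0)
  set K : ℝ := Real.sqrt (25 + 4 * C₁) with hK
  have hK0 : 0 ≤ K := Real.sqrt_nonneg _
  have hbound : ∀ θ : ℝ, 1 ≤ |θ| → ‖c₂ θ‖ ≤ (K + 5) / θ ^ 2 := by
    intro θ hθ1
    have hθ0 : θ ≠ 0 := by
      intro h; rw [h] at hθ1; simp at hθ1; linarith
    have habs0 : (0:ℝ) < |θ| := by linarith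
    have hA_bd : ‖A θ‖ ≤ 3 + 2 * |θ| := by
      have : A θ = 2 + Complex.exp (-(Complex.I * θ)) - 2 * Complex.I * θ := by
        rw [hA]; simp only [hb θ]
      rw [this]
      have h1 : ‖Complex.exp (-(Complex.I * (θ:ℂ)))‖ = 1 := by
        rw [Complex.norm_exp]
        simp
      have h2 : ‖2 * Complex.I * (θ:ℂ)‖ = 2 * |θ| := by
        simp

      calc ‖2 + Complex.exp (-(Complex.I * (θ:ℂ))) - 2 * Complex.I * θ‖
          ≤ ‖2 + Complex.exp (-(Complex.I * (θ:ℂ)))‖ + ‖2 * Complex.I * (θ:ℂ)‖ :=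
            norm_sub_le _ _
        _ ≤ ‖(2:ℂ)‖ + ‖Complex.exp (-(Complex.I * (θ:ℂ)))‖ + ‖2 * Complex.I * (θ:ℂ)‖ := by
            linarith [norm_add_le (2:ℂ) (Complex.exp (-(Complex.I * (θ:ℂ))))]
        _ = 3 + 2 * |θ| := by rw [h1, h2]; norm_num
    have hA_bd5 : ‖A θ‖ ≤ 5 * |θ| := by nlinarith
    have hth5 : ‖((θ:ℂ)) ^ 5‖ = |θ| ^ 5 := by
      rw [norm_pow, Complex.norm_real, Real.norm_eq_abs]
    have hD_bd : ‖D θ‖ ≤ (25 + 4 * C₁) * |θ| ^ 5 := by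
      have h1 : ‖D θ‖ ≤ ‖A θ‖ ^ 2 + 4 * C₁ * |θ| ^ 5 := by
        calc ‖D θ‖ ≤ ‖A θ ^ 2‖ + ‖4 * Complex.I * c₁ θ * (θ:ℂ) ^ 5‖ := norm_add_le _ _
          _ = ‖A θ‖ ^ 2 + 4 * ‖c₁ θ‖ * |θ| ^ 5 := by
              rw [norm_pow]
              congr 1
              rw [norm_mul, norm_mul, norm_mul, hth5]
              simp

          _ ≤ ‖A θ‖ ^ 2 + 4 * C₁ * |θ| ^ 5 := by
              have hc := hC₁ θ
              nlinarith [pow_nonneg (abs_nonneg θ) 5]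
      have h2 : ‖A θ‖ ^ 2 ≤ 25 * |θ| ^ 5 := by
        have h3 : ‖A θ‖ ^ 2 ≤ 25 * |θ| ^ 2 := by nlinarith [norm_nonneg (A θ)]
        have h4 : |θ| ^ 2 ≤ |θ| ^ 5 := pow_le_pow_right₀ hθ1 (by norm_num)
        nlinarith
      nlinarith
    have hg_bd : ‖g θ‖ ≤ K * |θ| ^ 3 := by
      have h1 : ‖g θ‖ ^ 2 = ‖D θ‖ := by rw [← norm_pow, hgsq θ]
      have h2 : ‖g θ‖ = Real.sqrt ‖D θ‖ := by
        rw [← h1, Real.sqrt_sq (norm_nonneg _)]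
      rw [h2]
      calc Real.sqrt ‖D θ‖ ≤ Real.sqrt ((25 + 4 * C₁) * |θ| ^ 5) := Real.sqrt_le_sqrt hD_bd
        _ ≤ Real.sqrt ((25 + 4 * C₁) * |θ| ^ 6) := by
            apply Real.sqrt_le_sqrt
            have : |θ| ^ 5 ≤ |θ| ^ 6 := pow_le_pow_right₀ hθ1 (by norm_num)
            nlinarith
        _ = K * |θ| ^ 3 := by
            rw [Real.sqrt_mul (by linarith), hK]
            congr 1
            rw [show |θ| ^ 6 = (|θ| ^ 3) ^ 2 by ring,
              Real.sqrt_sq (pow_nonneg (abs_nonneg θ) 3)]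
    have hgA_bd : ‖g θ - A θ‖ ≤ (K + 5) * |θ| ^ 3 := by
      have h5 : |θ| ≤ |θ| ^ 3 := by
        calc |θ| = |θ| ^ 1 := (pow_one _).symm
          _ ≤ |θ| ^ 3 := pow_le_pow_right₀ hθ1 (by norm_num)
      calc ‖g θ - A θ‖ ≤ ‖g θ‖ + ‖A θ‖ := norm_sub_le _ _
        _ ≤ K * |θ| ^ 3 + 5 * |θ| := by linarith
        _ ≤ (K + 5) * |θ| ^ 3 := by linarith
    have hc2norm : ‖c₂ θ‖ = ‖g θ - A θ‖ / |θ| ^ 5 := by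
      simp only [hc₂def, if_neg hθ0]
      rw [norm_div, hth5]
    rw [hc2norm]
    rw [div_le_div_iff₀ (by positivity) (by positivity)]
    calc ‖g θ - A θ‖ * θ ^ 2 ≤ ((K + 5) * |θ| ^ 3) * θ ^ 2 :=
          mul_le_mul_of_nonneg_right hgA_bd (sq_nonneg θ)
      _ = (K + 5) * |θ| ^ 5 := by rw [← _root_.sq_abs θ]; ring
  -- tendsto
  have htend : Tendsto c₂ (cocompact ℝ) (nhds 0) := by
    rw [tendsto_zero_iff_norm_tendsto_zero]
    have hmem1 : {θ : ℝ | 1 ≤ |θ|} ∈ cocompact ℝ := by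
      rw [Filter.mem_cocompact]
      refine ⟨Set.Icc (-1) 1, isCompact_Icc, ?_⟩
      intro θ hθ
      simp only [Set.mem_compl_iff, Set.mem_Icc, not_and_or, not_le] at hθ
      simp only [Set.mem_setOf_eq]
      rcases hθ with h | h
      · rw [_root_.abs_of_nonpos (by linarith)]; linarith
      · rw [_root_.abs_of_nonneg (by linarith)]; linarith
    have hev : ∀ᶠ θ in cocompact ℝ, ‖c₂ θ‖ ≤ (K + 5) / θ ^ 2 := by
      filter_upwards [hmem1] with θ hθ
      exact hbound θ hθ
    apply squeeze_zero' (Filter.Eventually.of_forall (fun θ => norm_nonneg _)) hev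
    have h1 : Tendsto (fun θ : ℝ => θ ^ 2) (cocompact ℝ) atTop := by
      have h2 : Tendsto (fun θ : ℝ => ‖θ‖ ^ 2) (cocompact ℝ) atTop :=
        (tendsto_pow_atTop two_ne_zero).comp tendsto_norm_cocompact_atTop
      have : (fun θ : ℝ => ‖θ‖ ^ 2) = fun θ : ℝ => θ ^ 2 := by
        funext θ
        rw [Real.norm_eq_abs, _root_.sq_abs]
      rwa [this] at h2
    have h3 : Tendsto (fun θ : ℝ => (K + 5) / θ ^ 2) (cocompact ℝ) (nhds ((K+5) * 0)) := by
      simp only [div_eq_mul_inv]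
      exact (h1.inv_tendsto_atTop).const_mul (K + 5)
    simpa using h3
  -- boundedness
  have hbdd : ∃ C₂ : ℝ, ∀ θ : ℝ, ‖c₂ θ‖ ≤ C₂ := by
    have hball : Metric.closedBall (0:ℂ) 1 ∈ nhds (0:ℂ) := Metric.closedBall_mem_nhds _ one_pos
    have hs : c₂ ⁻¹' Metric.closedBall (0:ℂ) 1 ∈ cocompact ℝ := htend hball
    rw [Filter.mem_cocompact] at hs
    obtain ⟨t, htc, hts⟩ := hs
    obtain ⟨C, hC⟩ := htc.exists_bound_of_continuousOn hc₂c.continuousOn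
    refine ⟨max C 1, fun θ => ?_⟩
    by_cases hθ : θ ∈ t
    · exact le_trans (hC θ hθ) (le_max_left _ _)
    · have : θ ∈ c₂ ⁻¹' Metric.closedBall (0:ℂ) 1 := hts hθ
      rw [Set.mem_preimage, Metric.mem_closedBall, Complex.dist_eq, sub_zero] at this
      exact le_trans this (le_max_right _ _)
  exact ⟨c₂, hc₂c, hbdd, hfirst, hsecond, htend⟩
end

section
/- Consider the semi-discretization of w_t + λw_x = 0 (λ > 0) on an N-cell uniform periodic grid of [0, L], h = L/N: w̄'_{j+1/2} + (λ/h)(w_{j+1} - w_j) = 0 and w'_j + (λ/h)(w_{j-1} - (7/2)w̄_{j-1/2} + 2w_j + (1/2)w̄_{j+1/2}) = 0, with exact simple-wave initial data w_j(0) = e^{iκx_j}, w̄_{j+1/2}(0) = (iκh)^{-1}(e^{iκx_{j+1}} - e^{iκx_j}) for κ = 2mπ/L, m a nonzero integer. Then there is a constant C depending only on L, T, λ, κ such that for all j and all h, |w_j(T) - e^{iκ(x_j - λT)}| ≤ Ch⁴ and |w̄_{j+1/2}(T) - (iκh)^{-1}(e^{iκ(x_{j+1}-λT)} - e^{iκ(x_j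 - λT)})| ≤ Ch⁴. -/
open Complex Finset

noncomputable def Complex.abs : AbsoluteValue ℂ ℝ where
  toFun z := ‖z‖
  map_mul' := norm_mul
  nonneg' := norm_nonneg
  eq_zero' _ := norm_eq_zero
  add_le' := norm_add_le

theorem Complex.norm_eq_abs (z : ℂ) : ‖z‖ = Complex.abs z := rfl

@[simp] theorem Complex.abs_exp (z : ℂ) : Complex.abs (Complex.exp z) = Real.exp z.re := Complex.norm_exp z

@[simp] theorem Complex.abs_I : Complex.abs I = 1 := Complex.norm_I

@[simp] theorem Complex.abs_ofReal (r : ℝ) : Complex.abs (r : ℂ) = |r| := Complex.norm_real r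

@[simp] theorem Complex.abs_ofNat' (n : ℕ) [n.AtLeastTwo] :
    Complex.abs (no_index (OfNat.ofNat n : ℂ)) = OfNat.ofNat n := Complex.norm_ofNat n

@[simp] theorem Complex.abs_one' : Complex.abs (1 : ℂ) = 1 := show ‖(1:ℂ)‖ = 1 from norm_one

@[simp] theorem Complex.abs_inv' (z : ℂ) : Complex.abs z⁻¹ = (Complex.abs z)⁻¹ := norm_inv z

@[simp] theorem Complex.abs_div' (a b : ℂ) : Complex.abs (a / b) = Complex.abs a / Complex.abs b :=
  norm_div a b

theorem Complex.re_le_abs (z : ℂ) : z.re ≤ Complex.abs z := Complex.re_le_norm z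

theorem Complex.abs_re_le_abs (z : ℂ) : |z.re| ≤ Complex.abs z := Complex.abs_re_le_norm z

theorem Complex.abs_exp_sub_one_le {x : ℂ} (hx : Complex.abs x ≤ 1) :
    Complex.abs (Complex.exp x - 1) ≤ 2 * Complex.abs x := Complex.norm_exp_sub_one_le hx

theorem abs_exp_sub_one_le' (w : ℂ) : Complex.abs (Complex.exp w - 1) ≤ Complex.abs w * Real.exp (Complex.abs w) := by
  have h := Convex.norm_image_sub_le_of_norm_hasDerivWithin_le
    (f := fun t : ℝ => Complex.exp (t * w)) (f' := fun t : ℝ => w * Complex.exp (t * w))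
    (C := Complex.abs w * Real.exp (Complex.abs w)) (s := Set.Icc (0:ℝ) 1) (x := (0:ℝ)) (y := (1:ℝ))
    ?_ ?_ (convex_Icc 0 1) ?_ ?_
  · simpa [Complex.norm_eq_abs] using h
  · intro t ht
    have : HasDerivAt (fun t : ℝ => Complex.exp (t * w)) (w * Complex.exp (t*w)) t := by
      have := ((hasDerivAt_id t).ofReal_comp.mul_const w).cexp
      simpa [mul_comm] using this
    exact this.hasDerivWithinAt
  · intro t ht
    rw [Complex.norm_eq_abs, map_mul, Complex.abs_exp]
    have h1 : (t*w:ℂ).re ≤ Complex.abs w := by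
      calc (t*w:ℂ).re ≤ Complex.abs (t*w:ℂ) := Complex.re_le_abs _
        _ = |t| * Complex.abs w := by rw [map_mul]; simp [Complex.abs_ofReal]
        _ ≤ 1 * Complex.abs w := by
            gcongr; exact abs_le.mpr ⟨by linarith [ht.1], ht.2⟩
        _ = Complex.abs w := one_mul _
    gcongr
  · exact Set.left_mem_Icc.2 zero_le_one
  · exact Set.right_mem_Icc.2 zero_le_one


theorem exp_taylor5 (x : ℂ) (hx : Complex.abs x ≤ 1) :
    Complex.abs (Complex.exp x - (1 + x + x^2/2 + x^3/6 + x^4/24)) ≤ Complex.abs x ^ 5 / 100 := by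
  have h := Complex.exp_bound hx (n := 5) (by norm_num)
  have hsum : (∑ m ∈ range 5, x ^ m / (m.factorial : ℂ)) = 1 + x + x^2/2 + x^3/6 + x^4/24 := by
    simp [Finset.sum_range_succ, Nat.factorial]
  rw [hsum] at h
  norm_num [Nat.factorial] at h ⊢
  simp only [Complex.norm_eq_abs] at h
  linarith

theorem abs_sub_abs_le (a b : ℂ) : Complex.abs (a - b) ≤ Complex.abs a + Complex.abs b := by
  have := Complex.abs.add_le a (-b)
  rwa [← sub_eq_add_neg, Complex.abs.map_neg] at this

theorem taylor_p_bound (u : ℂ) (hu : Complex.abs u ≤ 1) :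
    Complex.abs (u^2 - u * Complex.exp (-u) - 2*u + 4 - (1/2) * Complex.exp u - (7/2) * Complex.exp (-u))
      ≤ Complex.abs u ^ 5 / 10 := by
  have hmu : Complex.abs (-u) ≤ 1 := by rwa [Complex.abs.map_neg]
  have h1 := exp_taylor5 u hu
  have h2 := exp_taylor5 (-u) hmu
  set R1 : ℂ := Complex.exp u - (1 + u + u^2/2 + u^3/6 + u^4/24) with hR1
  set R2 : ℂ := Complex.exp (-u) - (1 + (-u) + (-u)^2/2 + (-u)^3/6 + (-u)^4/24) with hR2
  have key : u^2 - u * Complex.exp (-u) - 2*u + 4 - (1/2) * Complex.exp u - (7/2) * Complex.exp (-u)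
      = -u^5/24 - u * R2 - (1/2)*R1 - (7/2)*R2 := by
    rw [hR1, hR2]; ring
  rw [key]
  have e1 := abs_sub_abs_le (-u^5/24 - u * R2 - (1/2)*R1) ((7/2)*R2)
  have e2 := abs_sub_abs_le (-u^5/24 - u * R2) ((1/2)*R1)
  have e3 := abs_sub_abs_le (-u^5/24) (u*R2)
  have e4 : Complex.abs (-u^5/24) = Complex.abs u ^ 5 / 24 := by
    rw [map_div₀, Complex.abs.map_neg, Complex.abs.map_pow]
    norm_num
  have e5 : Complex.abs (u * R2) = Complex.abs u * Complex.abs R2 := Complex.abs.map_mul _ _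
  have e6 : Complex.abs ((1/2:ℂ)*R1) = (1/2) * Complex.abs R1 := by
    rw [Complex.abs.map_mul]; norm_num
  have e7 : Complex.abs ((7/2:ℂ)*R2) = (7/2) * Complex.abs R2 := by
    rw [Complex.abs.map_mul]; norm_num
  have hm2 : Complex.abs (-u) ^ 5 = Complex.abs u ^ 5 := by rw [Complex.abs.map_neg]
  rw [hm2] at h2
  have hR2n := Complex.abs.nonneg R2
  have huR2 : Complex.abs u * Complex.abs R2 ≤ Complex.abs R2 :=
    mul_le_of_le_one_left hR2n hu
  nlinarith [Complex.abs.nonneg R1, pow_nonneg (Complex.abs.nonneg u) 5]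


theorem per_ext {N : ℕ} (f : ℤ → ℝ → ℂ) (hf : ∀ j : ℤ, f (j + N) = f j) (hN : 0 < N) :
    ∀ j : ℤ, f j = f (j % N) := by
  have key : ∀ (k : ℤ) (j : ℤ), f (j + k * N) = f j := by
    intro k
    induction k using Int.induction_on with
    | zero => simp
    | succ n ih => intro j
                   have : (j : ℤ) + (n+1) * N = (j + n * N) + N := by ring
                   rw [this, hf, ih]
    | pred n ih => intro j
                   have h1 := hf (j + (-(n:ℤ) - 1) * N)
                   have e : (j : ℤ) + (-(n:ℤ) - 1) * N + N = j + (-(n:ℤ)) * N := by ring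
                   rw [e] at h1
                   rw [← h1, ih]
  intro j
  have : j % N + (j / N) * N = j := by
    rw [mul_comm]
    exact Int.emod_add_mul_ediv j N
  conv_lhs => rw [← this]
  rw [key]

theorem abs4 (a b cc d : ℂ) :
    Complex.abs (a - (7/2)*b + 2*cc + (1/2)*d)
      ≤ Complex.abs a + (7/2)*Complex.abs b + 2*Complex.abs cc + (1/2)*Complex.abs d := by
  have e1 := Complex.abs.add_le (a - (7/2)*b + 2*cc) ((1/2)*d)
  have e2 := Complex.abs.add_le (a - (7/2)*b) (2*cc)
  have e3 : Complex.abs (a - (7/2)*b) ≤ Complex.abs a + Complex.abs ((7/2)*b) := by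
    have := Complex.abs.add_le a (-((7/2)*b))
    rwa [← sub_eq_add_neg, Complex.abs.map_neg] at this
  have e4 : Complex.abs ((7/2:ℂ)*b) = (7/2)*Complex.abs b := by rw [Complex.abs.map_mul]; norm_num
  have e5 : Complex.abs ((2:ℂ)*cc) = 2*Complex.abs cc := by rw [Complex.abs.map_mul]; norm_num
  have e6 : Complex.abs ((1/2:ℂ)*d) = (1/2)*Complex.abs d := by rw [Complex.abs.map_mul]; norm_num
  linarith

theorem gron {N : ℕ} (hN : 0 < N) (c : ℂ) (T : ℝ) (hT : 0 ≤ T) (M : ℝ) (hM : 0 ≤ M)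
    (w wb : ℤ → ℝ → ℂ)
    (hwper : ∀ j : ℤ, w (j + N) = w j) (hwbper : ∀ j : ℤ, wb (j + N) = wb j)
    (hode1 : ∀ j : ℤ, ∀ t ∈ Set.Icc (0:ℝ) T, HasDerivAt (wb j) (c * (w (j+1) t - w j t)) t)
    (hode2 : ∀ j : ℤ, ∀ t ∈ Set.Icc (0:ℝ) T, HasDerivAt (w j)
      (c * (w (j-1) t - (7/2)*wb (j-1) t + 2*w j t + (1/2)*wb j t)) t)
    (hinit : ∀ j : ℤ, Complex.abs (w j 0) ≤ M ∧ Complex.abs (wb j 0) ≤ M) :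
    ∀ j : ℤ, Complex.abs (w j T) ≤ M * Real.exp (7*Complex.abs c*T) ∧
      Complex.abs (wb j T) ≤ M * Real.exp (7*Complex.abs c*T) := by
  set E := Fin N → ℂ × ℂ
  set g : ℝ → E := fun t i => (w (i:ℕ) t, wb (i:ℕ) t) with hg
  set g' : ℝ → E := fun t i => (c * (w ((i:ℕ)-1) t - (7/2)*wb ((i:ℕ)-1) t + 2*w (i:ℕ) t + (1/2)*wb (i:ℕ) t),
      c * (w ((i:ℕ)+1) t - w (i:ℕ) t)) with hg'
  -- index reduction
  have idx : ∀ (j : ℤ) (t : ℝ), Complex.abs (w j t) ≤ ‖g t‖ ∧ Complex.abs (wb j t) ≤ ‖g t‖ := by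
    intro j t
    have hmod0 : (0:ℤ) ≤ j % N := Int.emod_nonneg j (by exact_mod_cast hN.ne')
    have hmodlt : j % N < N := Int.emod_lt_of_pos j (by exact_mod_cast hN)
    set i : Fin N := ⟨(j % N).toNat, by omega⟩ with hi
    have hcast : ((i:ℕ) : ℤ) = j % N := by
      simp [hi, Int.toNat_of_nonneg hmod0]
    have hw : w j t = (g t i).1 := by
      rw [hg]; simp only; rw [hcast, ← per_ext w hwper hN j]
    have hwb : wb j t = (g t i).2 := by
      rw [hg]; simp only; rw [hcast, ← per_ext wb hwbper hN j]
    constructor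
    · rw [hw, ← Complex.norm_eq_abs]
      exact le_trans (norm_fst_le _) (norm_le_pi_norm (g t) i)
    · rw [hwb, ← Complex.norm_eq_abs]
      exact le_trans (norm_snd_le _) (norm_le_pi_norm (g t) i)
  have hderiv : ∀ t ∈ Set.Icc (0:ℝ) T, HasDerivAt g (g' t) t := by
    intro t ht
    rw [hasDerivAt_pi]
    intro i
    exact ((hode2 _ t ht).prodMk (hode1 _ t ht))
  have hbound : ∀ t ∈ Set.Icc (0:ℝ) T, ‖g' t‖ ≤ (7*Complex.abs c) * ‖g t‖ + 0 := by
    intro t ht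
    rw [add_zero]
    have hnn : 0 ≤ (7*Complex.abs c) * ‖g t‖ :=
      mul_nonneg (by positivity) (norm_nonneg _)
    rw [pi_norm_le_iff_of_nonneg hnn]
    intro i
    rw [Prod.norm_def]
    have hK := idx ((i:ℕ):ℤ) t
    have hKm := idx (((i:ℕ):ℤ)-1) t
    have hKp := idx (((i:ℕ):ℤ)+1) t
    apply max_le
    · rw [Complex.norm_eq_abs, Complex.abs.map_mul]
      calc Complex.abs c * Complex.abs (w ((i:ℕ)-1) t - (7/2)*wb ((i:ℕ)-1) t + 2*w (i:ℕ) t + (1/2)*wb (i:ℕ) t)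
          ≤ Complex.abs c * (Complex.abs (w ((i:ℕ)-1) t) + (7/2)*Complex.abs (wb ((i:ℕ)-1) t)
            + 2*Complex.abs (w (i:ℕ) t) + (1/2)*Complex.abs (wb (i:ℕ) t)) := by
            exact mul_le_mul_of_nonneg_left (abs4 _ _ _ _) (Complex.abs.nonneg c)
        _ ≤ Complex.abs c * (7 * ‖g t‖) := by
            apply mul_le_mul_of_nonneg_left _ (Complex.abs.nonneg c)
            have := hKm.1; have := hKm.2; have := hK.1; have := hK.2
            linarith
        _ = 7*Complex.abs c * ‖g t‖ := by ring
    · rw [Complex.norm_eq_abs, Complex.abs.map_mul]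
      have habs : Complex.abs (w ((i:ℕ)+1) t - w (i:ℕ) t)
          ≤ Complex.abs (w ((i:ℕ)+1) t) + Complex.abs (w (i:ℕ) t) := by
        have := Complex.abs.add_le (w ((i:ℕ)+1) t) (-(w (i:ℕ) t))
        rwa [← sub_eq_add_neg, Complex.abs.map_neg] at this
      have h1 := hKp.1; have h2 := hK.1
      have hgn : (0:ℝ) ≤ ‖g t‖ := norm_nonneg _
      nlinarith [Complex.abs.nonneg c]
  have hcont : ContinuousOn g (Set.Icc 0 T) := by
    intro t ht
    exact ((hderiv t ht).continuousAt).continuousWithinAt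
  have hinit' : ‖g 0‖ ≤ M := by
    rw [pi_norm_le_iff_of_nonneg hM]
    intro i
    rw [Prod.norm_def]
    exact max_le (by rw [Complex.norm_eq_abs]; exact (hinit _).1)
      (by rw [Complex.norm_eq_abs]; exact (hinit _).2)
  have key := norm_le_gronwallBound_of_norm_deriv_right_le hcont
    (fun x hx => (hderiv x (Set.mem_Icc.2 ⟨hx.1, le_of_lt hx.2⟩)).hasDerivWithinAt)
    hinit' (fun x hx => hbound x (Set.mem_Icc.2 ⟨hx.1, le_of_lt hx.2⟩)) T (Set.mem_Icc.2 ⟨hT, le_rfl⟩)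
  rw [gronwallBound_ε0, sub_zero] at key
  intro j
  exact ⟨le_trans (idx j T).1 key, le_trans (idx j T).2 key⟩

noncomputable def trC (θ : ℝ) : ℂ := Complex.exp (-(I*θ)) + 2
noncomputable def ecC (θ : ℝ) : ℂ := (7/2)*Complex.exp (-(I*θ)) - 1/2
noncomputable def detC (θ : ℝ) : ℂ := (Complex.exp (I*θ) - 1) * ecC θ
noncomputable def DC (θ : ℝ) : ℂ := trC θ^2 - 4*detC θ
noncomputable def sC (θ : ℝ) : ℂ := Complex.exp (Complex.log (DC θ) / 2)
noncomputable def mupC (θ : ℝ) : ℂ := (trC θ + sC θ)/2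
noncomputable def mumC (θ : ℝ) : ℂ := (trC θ - sC θ)/2
noncomputable def cpC (θ : ℝ) : ℂ := (I*θ - mumC θ)/((I*θ)*sC θ)
noncomputable def cmC (θ : ℝ) : ℂ := (mupC θ - I*θ)/((I*θ)*sC θ)

theorem abs_sub_le' (a b : ℂ) : Complex.abs (a - b) ≤ Complex.abs a + Complex.abs b := by
  have := Complex.abs.add_le a (-b)
  rwa [← sub_eq_add_neg, Complex.abs.map_neg] at this

theorem abs_lower (a b : ℂ) : Complex.abs a - Complex.abs b ≤ Complex.abs (a - b) := by
  have : Complex.abs a ≤ Complex.abs (a - b) + Complex.abs b := by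
    have := Complex.abs.add_le (a - b) b
    simpa using this
  linarith

section facts
variable {θ : ℝ} (hθ : θ ≠ 0) (h1 : |θ| ≤ 1/100)

theorem abs_Iθ : Complex.abs (I*(θ:ℂ)) = |θ| := by
  rw [Complex.abs.map_mul, Complex.abs_I, one_mul, Complex.abs_ofReal]

include h1 in
theorem F1 : Complex.abs (Complex.exp (I*(θ:ℂ)) - 1) ≤ 2*|θ| := by
  have h := Complex.abs_exp_sub_one_le (x := I*θ) (by rw [abs_Iθ]; linarith)
  rwa [abs_Iθ] at h

include h1 in
theorem F1' : Complex.abs (Complex.exp (-(I*(θ:ℂ))) - 1) ≤ 2*|θ| := by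
  have h := Complex.abs_exp_sub_one_le (x := -(I*θ)) (by rw [Complex.abs.map_neg, abs_Iθ]; linarith)
  rwa [Complex.abs.map_neg, abs_Iθ] at h

include h1 in
theorem F2 : Complex.abs (trC θ - 3) ≤ 2*|θ| := by
  have := F1' (θ := θ) h1
  have e : trC θ - 3 = Complex.exp (-(I*(θ:ℂ))) - 1 := by rw [trC]; ring
  rwa [e]

theorem absexp1 : Complex.abs (Complex.exp (-(I*(θ:ℂ)))) = 1 := by
  rw [Complex.abs_exp]; simp

theorem absexp1' : Complex.abs (Complex.exp (I*(θ:ℂ))) = 1 := by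
  rw [Complex.abs_exp]; simp

theorem F3 : Complex.abs (ecC θ) ≤ 4 := by
  rw [ecC]
  refine le_trans (abs_sub_le' _ _) ?_
  rw [Complex.abs.map_mul]
  rw [absexp1]
  simp
  norm_num

include h1 in
theorem F4 : Complex.abs (detC θ) ≤ 8*|θ| := by
  rw [detC, Complex.abs.map_mul]
  calc Complex.abs (Complex.exp (I*(θ:ℂ)) - 1) * Complex.abs (ecC θ) ≤ (2*|θ|) * 4 := by
        apply mul_le_mul (F1 h1) (F3) (Complex.abs.nonneg _) (by positivity)
    _ = 8*|θ| := by ring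

include h1 in
theorem F5 : Complex.abs (DC θ - 9) ≤ 45*|θ| := by
  have e : DC θ - 9 = (trC θ - 3)*((trC θ - 3) + 6) - 4*detC θ := by rw [DC]; ring
  rw [e]
  refine le_trans (abs_sub_le' _ _) ?_
  rw [Complex.abs.map_mul, Complex.abs.map_mul]
  have h2 := F2 h1
  have h4 := F4 h1
  have h6 : Complex.abs ((trC θ - 3) + 6) ≤ 2*|θ| + 6 := by
    refine le_trans (Complex.abs.add_le _ _) ?_
    simp
    linarith
  have hn := Complex.abs.nonneg (trC θ - 3)
  have hθn : (0:ℝ) ≤ |θ| := abs_nonneg θ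
  have h4' : Complex.abs (4:ℂ) = 4 := by norm_num
  rw [h4']
  nlinarith

include h1 in
theorem F6 : DC θ ≠ 0 := by
  intro h
  have h5 := F5 h1
  rw [h, zero_sub, Complex.abs.map_neg] at h5
  norm_num at h5
  linarith

include h1 in
theorem F7 : sC θ ^ 2 = DC θ := by
  rw [sC, sq, ← Complex.exp_add]
  have e : Complex.log (DC θ) / 2 + Complex.log (DC θ) / 2 = Complex.log (DC θ) := by ring
  rw [e, Complex.exp_log (F6 h1)]

theorem F8 : 0 ≤ (sC θ).re := by
  rw [sC, Complex.exp_re]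
  apply mul_nonneg (Real.exp_nonneg _)
  apply Real.cos_nonneg_of_mem_Icc
  constructor
  · have := Complex.neg_pi_lt_arg (DC θ)
    have harg : (Complex.log (DC θ) / 2).im = (DC θ).arg / 2 := by
      rw [Complex.div_im]; simp [Complex.log_im]; ring
    rw [harg]
    have := Real.pi_pos
    linarith [Complex.neg_pi_lt_arg (DC θ)]
  · have harg : (Complex.log (DC θ) / 2).im = (DC θ).arg / 2 := by
      rw [Complex.div_im]; simp [Complex.log_im]; ring
    rw [harg]
    linarith [Complex.arg_le_pi (DC θ)]

include h1 in
theorem F9 : Complex.abs (sC θ - 3) ≤ 15*|θ| := by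
  have h7 := F7 h1
  have hfac : (sC θ - 3) * (sC θ + 3) = DC θ - 9 := by
    have : sC θ^2 - 9 = DC θ - 9 := by rw [h7]
    linear_combination this
  have hlow : (3:ℝ) ≤ Complex.abs (sC θ + 3) := by
    have : (sC θ + 3).re ≤ Complex.abs (sC θ + 3) := Complex.re_le_abs _
    have hre : (sC θ + 3).re = (sC θ).re + 3 := by simp
    have := F8 (θ := θ)
    linarith
  have habs : Complex.abs (sC θ - 3) * Complex.abs (sC θ + 3) = Complex.abs (DC θ - 9) := by
    rw [← Complex.abs.map_mul, hfac]
  have h5 := F5 h1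
  have hn1 := Complex.abs.nonneg (sC θ - 3)
  nlinarith
end facts

section facts2
variable {θ : ℝ} (hθ : θ ≠ 0) (h1 : |θ| ≤ 1/100)

include h1 in
theorem F10 : 2 ≤ Complex.abs (sC θ) := by
  have h9 := F9 h1
  have := abs_lower (sC θ) ((sC θ) - 3)
  simp at this
  have h3 : Complex.abs (3:ℂ) = 3 := by norm_num
  have h9' : Complex.abs (sC θ - 3) ≤ 0.15 := by linarith
  have hlow : Complex.abs (sC θ) ≥ Complex.abs (3:ℂ) - Complex.abs (3 - sC θ) := by
    have := abs_lower (3:ℂ) (3 - sC θ)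
    simpa using this
  rw [h3] at hlow
  have : Complex.abs (3 - sC θ) = Complex.abs (sC θ - 3) := by
    rw [← Complex.abs.map_neg]; ring_nf
  linarith

include h1 in
theorem F11p : Complex.abs (mupC θ - 3) ≤ 9*|θ| := by
  rw [mupC]
  have e : (trC θ + sC θ)/2 - 3 = ((trC θ - 3) + (sC θ - 3))/2 := by ring
  rw [e, map_div₀]
  have := Complex.abs.add_le (trC θ - 3) (sC θ - 3)
  have h2 := F2 h1; have h9 := F9 h1
  have : Complex.abs ((trC θ - 3) + (sC θ - 3)) ≤ 17*|θ| := by linarith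
  have h2' : Complex.abs (2:ℂ) = 2 := by norm_num
  rw [h2']
  have := abs_nonneg θ
  linarith

include h1 in
theorem F11m : Complex.abs (mumC θ) ≤ 9*|θ| := by
  rw [mumC]
  have e : (trC θ - sC θ)/2 = ((trC θ - 3) - (sC θ - 3))/2 := by ring
  rw [e, map_div₀]
  have := abs_sub_le' (trC θ - 3) (sC θ - 3)
  have h2 := F2 h1; have h9 := F9 h1
  have h2' : Complex.abs (2:ℂ) = 2 := by norm_num
  rw [h2']
  have := abs_nonneg θ
  linarith

include h1 in
theorem F11re : 2 ≤ (mupC θ).re := by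
  have h := F11p h1
  have : |(mupC θ - 3).re| ≤ Complex.abs (mupC θ - 3) := Complex.abs_re_le_abs _
  have hre : (mupC θ - 3).re = (mupC θ).re - 3 := by simp
  rw [hre] at this
  have := abs_le.1 this
  have hb : 9*|θ| ≤ 0.09 := by linarith
  linarith [this.1]

include h1 in
theorem F12 : (I*(θ:ℂ) - mumC θ) * (I*(θ:ℂ) - mupC θ) = (I*(θ:ℂ))^2 - trC θ * (I*(θ:ℂ)) + detC θ := by
  have h7 := F7 h1
  have hsum : mumC θ + mupC θ = trC θ := by rw [mumC, mupC]; ring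
  have hprod : mumC θ * mupC θ = detC θ := by
    rw [mumC, mupC]
    have : DC θ = trC θ^2 - 4*detC θ := rfl
    linear_combination (-1/4 : ℂ) * h7 + (-1/4 : ℂ) * this
  linear_combination (-(I*(θ:ℂ))) * hsum + hprod

end facts2

section facts3
variable {θ : ℝ} (hθ : θ ≠ 0) (h1 : |θ| ≤ 1/100)

include h1 in
theorem F13 : Complex.abs ((I*(θ:ℂ))^2 - trC θ * (I*(θ:ℂ)) + detC θ) ≤ |θ|^5/10 := by
  set u : ℂ := I*(θ:ℂ) with hu
  have habs : Complex.abs u = |θ| := abs_Iθ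
  have hmul : Complex.exp u * Complex.exp (-u) = 1 := by
    rw [← Complex.exp_add]; simp
  have e : u^2 - trC θ * u + detC θ
      = u^2 - u * Complex.exp (-u) - 2*u + 4 - (1/2) * Complex.exp u - (7/2) * Complex.exp (-u) := by
    rw [trC, detC, ecC]
    linear_combination ((7/2 : ℂ)) * hmul
  rw [e]
  have := taylor_p_bound u (by rw [habs]; linarith)
  rwa [habs] at this

include hθ h1 in
theorem F14 : 2 ≤ Complex.abs (I*(θ:ℂ) - mupC θ) := by
  have hp := F11p h1
  set x : ℂ := I*(θ:ℂ) - mupC θ + 3 with hx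
  have hxb : Complex.abs x ≤ 10*|θ| := by
    have e : x = I*(θ:ℂ) - (mupC θ - 3) := by rw [hx]; ring
    rw [e]
    refine le_trans (abs_sub_le' _ _) ?_
    rw [abs_Iθ]
    linarith
  have hlow := abs_lower (3:ℂ) x
  have h3 : Complex.abs (3:ℂ) = 3 := by norm_num
  have e2 : (3:ℂ) - x = -(I*(θ:ℂ) - mupC θ) := by rw [hx]; ring
  rw [h3, e2, Complex.abs.map_neg] at hlow
  linarith

include hθ h1 in
theorem F15 : Complex.abs (mumC θ - I*(θ:ℂ)) ≤ |θ|^5/20 := by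
  have h12 := F12 h1
  have h13 := F13 h1
  have h14 := F14 hθ h1
  have habs : Complex.abs (I*(θ:ℂ) - mumC θ) * Complex.abs (I*(θ:ℂ) - mupC θ)
      = Complex.abs ((I*(θ:ℂ))^2 - trC θ * (I*(θ:ℂ)) + detC θ) := by
    rw [← Complex.abs.map_mul, h12]
  have e : Complex.abs (mumC θ - I*(θ:ℂ)) = Complex.abs (I*(θ:ℂ) - mumC θ) := by
    rw [← Complex.abs.map_neg]; ring_nf
  rw [e]
  nlinarith [Complex.abs.nonneg (I*(θ:ℂ) - mumC θ), Complex.abs.nonneg (I*(θ:ℂ) - mupC θ)]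

include h1 in
theorem hs0 : sC θ ≠ 0 := by
  intro h
  have := F10 h1
  rw [h] at this
  simp at this
  linarith

include hθ in
theorem hu0 : I*(θ:ℂ) ≠ 0 := by
  simp [Complex.ext_iff, hθ, I_ne_zero]

include hθ h1 in
theorem F16a : cmC θ * mumC θ + cpC θ * mupC θ = 1 := by
  have hs := hs0 h1
  have hu := hu0 (θ := θ) hθ
  rw [cmC, cpC]
  field_simp
  rw [mumC, mupC]
  ring
  rw [mul_assoc, mul_inv_cancel₀ (Complex.ofReal_ne_zero.2 hθ), mul_one]

include hθ h1 in
theorem F16b : cmC θ + cpC θ = 1/(I*(θ:ℂ)) := by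
  have hs := hs0 h1
  have hu := hu0 (θ := θ) hθ
  rw [cmC, cpC]
  field_simp
  rw [mumC, mupC]
  ring

include hθ h1 in
theorem F17 : Complex.abs (cpC θ) ≤ |θ|^4/40 := by
  have hs := F10 h1
  have h15 := F15 hθ h1
  have hθp : 0 < |θ| := abs_pos.2 hθ
  rw [cpC, map_div₀, Complex.abs.map_mul, abs_Iθ]
  have e : Complex.abs (I*(θ:ℂ) - mumC θ) = Complex.abs (mumC θ - I*(θ:ℂ)) := by
    rw [← Complex.abs.map_neg]; ring_nf
  rw [e]
  rw [div_le_iff₀ (by positivity)]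
  calc Complex.abs (mumC θ - I*(θ:ℂ)) ≤ |θ|^5/20 := h15
    _ ≤ |θ|^4/40 * (|θ| * 2) := by nlinarith [pow_nonneg (le_of_lt hθp) 4]
    _ ≤ |θ|^4/40 * (|θ| * Complex.abs (sC θ)) := by gcongr

end facts3

section est
variable {θ τ : ℝ} (hθ : θ ≠ 0) (h1 : |θ| ≤ 1/100) (hτ : 0 ≤ τ)

include h1 hτ in
theorem Ep_bound : Complex.abs (Complex.exp (-(τ:ℂ)*mupC θ)) ≤ 1 := by
  rw [Complex.abs_exp]
  have hre : (-(τ:ℂ)*mupC θ).re = -τ * (mupC θ).re := by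
    simp [Complex.mul_re]
  rw [hre]
  rw [Real.exp_le_one_iff]
  nlinarith [F11re h1]

include hθ h1 hτ in
theorem mum_re_bound : -(|θ|^5/20) ≤ (mumC θ).re := by
  have h15 := F15 hθ h1
  have : |(mumC θ - I*(θ:ℂ)).re| ≤ Complex.abs (mumC θ - I*(θ:ℂ)) := Complex.abs_re_le_abs _
  have hre : (mumC θ - I*(θ:ℂ)).re = (mumC θ).re := by
    simp [Complex.sub_re]
  rw [hre] at this
  have := abs_le.1 this
  linarith [this.1]

include hθ h1 hτ in
theorem Em_bound : Complex.abs (Complex.exp (-(τ:ℂ)*mumC θ)) ≤ Real.exp (τ*|θ|^5) := by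
  rw [Complex.abs_exp]
  apply Real.exp_le_exp.2
  have hre : (-(τ:ℂ)*mumC θ).re = -τ * (mumC θ).re := by simp [Complex.mul_re]
  rw [hre]
  have := mum_re_bound hθ h1 hτ
  nlinarith [pow_nonneg (abs_nonneg θ) 5]

theorem Eex_abs : Complex.abs (Complex.exp (-(τ:ℂ)*(I*(θ:ℂ)))) = 1 := by
  rw [Complex.abs_exp]
  have : (-(τ:ℂ)*(I*(θ:ℂ))).re = 0 := by simp [Complex.mul_re]
  rw [this, Real.exp_zero]

include hθ h1 hτ in
theorem Ediff_bound : Complex.abs (Complex.exp (-(τ:ℂ)*mumC θ) - Complex.exp (-(τ:ℂ)*(I*(θ:ℂ))))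
    ≤ (τ*|θ|^5) * Real.exp (τ*|θ|^5) := by
  set w : ℂ := (-(τ:ℂ))*(mumC θ - I*(θ:ℂ)) with hw
  have hsplit : Complex.exp (-(τ:ℂ)*mumC θ)
      = Complex.exp (-(τ:ℂ)*(I*(θ:ℂ))) * Complex.exp w := by
    rw [← Complex.exp_add]
    congr 1
    rw [hw]; ring
  have e : Complex.exp (-(τ:ℂ)*mumC θ) - Complex.exp (-(τ:ℂ)*(I*(θ:ℂ)))
      = Complex.exp (-(τ:ℂ)*(I*(θ:ℂ))) * (Complex.exp w - 1) := by
    rw [hsplit]; ring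
  rw [e, Complex.abs.map_mul, Eex_abs, one_mul]
  have hwabs : Complex.abs w ≤ τ*(|θ|^5/20) := by
    rw [hw, Complex.abs.map_mul]
    have : Complex.abs (-(τ:ℂ)) = τ := by
      rw [Complex.abs.map_neg, Complex.abs_ofReal, _root_.abs_of_nonneg hτ]
    rw [this]
    exact mul_le_mul_of_nonneg_left (F15 hθ h1) hτ
  have hQ : τ*(|θ|^5/20) ≤ τ*|θ|^5 := by nlinarith [pow_nonneg (abs_nonneg θ) 5]
  refine le_trans (abs_exp_sub_one_le' w) ?_
  have hwn := Complex.abs.nonneg w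
  have : Real.exp (Complex.abs w) ≤ Real.exp (τ*|θ|^5) := Real.exp_le_exp.2 (by linarith)
  nlinarith [Real.exp_pos (τ*|θ|^5), Real.exp_nonneg (Complex.abs w)]

include hθ h1 hτ in
theorem estA : Complex.abs (cmC θ * mumC θ * Complex.exp (-(τ:ℂ)*mumC θ)
      + cpC θ * mupC θ * Complex.exp (-(τ:ℂ)*mupC θ) - Complex.exp (-(τ:ℂ)*(I*(θ:ℂ))))
    ≤ Real.exp (τ*|θ|^5) * (2*(τ*|θ|^5) + |θ|^4) := by
  set Em := Complex.exp (-(τ:ℂ)*mumC θ)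
  set Ep := Complex.exp (-(τ:ℂ)*mupC θ)
  set Eex := Complex.exp (-(τ:ℂ)*(I*(θ:ℂ)))
  have h16 := F16a hθ h1
  have hcm : cmC θ * mumC θ = 1 - cpC θ * mupC θ := by linear_combination h16
  have e : cmC θ * mumC θ * Em + cpC θ * mupC θ * Ep - Eex
      = (Em - Eex) + (cpC θ * mupC θ) * (Ep - Em) := by
    rw [hcm]; ring
  rw [e]
  have hmup : Complex.abs (mupC θ) ≤ 4 := by
    have := F11p h1
    have := abs_lower (mupC θ) (mupC θ - 3)
    simp at this
    have h3 : Complex.abs (3:ℂ) = 3 := by norm_num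
    have hup : Complex.abs (mupC θ) ≤ Complex.abs (mupC θ - 3) + Complex.abs (3:ℂ) := by
      have := Complex.abs.add_le (mupC θ - 3) 3
      simpa using this
    rw [h3] at hup
    have := F11p h1
    linarith
  have hcpmup : Complex.abs (cpC θ * mupC θ) ≤ |θ|^4/10 := by
    rw [Complex.abs.map_mul]
    have h17 := F17 hθ h1
    have := Complex.abs.nonneg (cpC θ)
    nlinarith [pow_nonneg (abs_nonneg θ) 4]
  have hEd := Ediff_bound hθ h1 hτ
  have hEp := Ep_bound (θ := θ) h1 hτ
  have hEm := Em_bound hθ h1 hτ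
  have hPM : Complex.abs (Ep - Em) ≤ 1 + Real.exp (τ*|θ|^5) := by
    refine le_trans (abs_sub_le' _ _) ?_
    linarith
  have htot := Complex.abs.add_le (Em - Eex) ((cpC θ * mupC θ) * (Ep - Em))
  rw [Complex.abs.map_mul] at htot
  have hQ0 : 0 ≤ τ*|θ|^5 := mul_nonneg hτ (pow_nonneg (abs_nonneg θ) 5)
  have hexp1 : 1 ≤ Real.exp (τ*|θ|^5) := Real.one_le_exp hQ0
  have h4 : 0 ≤ |θ|^4 := pow_nonneg (abs_nonneg θ) 4
  nlinarith [Complex.abs.nonneg (Ep - Em), Complex.abs.nonneg (cpC θ * mupC θ),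
    Real.exp_pos (τ*|θ|^5)]

include hθ h1 hτ in
theorem estB : Complex.abs ((Complex.exp (I*(θ:ℂ)) - 1) * (cmC θ * Complex.exp (-(τ:ℂ)*mumC θ)
      + cpC θ * Complex.exp (-(τ:ℂ)*mupC θ))
      - Complex.exp (-(τ:ℂ)*(I*(θ:ℂ))) * (Complex.exp (I*(θ:ℂ)) - 1) / (I*(θ:ℂ)))
    ≤ Real.exp (τ*|θ|^5) * (2*(τ*|θ|^5) + |θ|^4) := by
  set Em := Complex.exp (-(τ:ℂ)*mumC θ)
  set Ep := Complex.exp (-(τ:ℂ)*mupC θ)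
  set Eex := Complex.exp (-(τ:ℂ)*(I*(θ:ℂ)))
  set z1 := Complex.exp (I*(θ:ℂ)) - 1
  have h16 := F16b hθ h1
  have hcm : cmC θ = 1/(I*(θ:ℂ)) - cpC θ := by linear_combination h16
  have e : z1 * (cmC θ * Em + cpC θ * Ep) - Eex * z1 / (I*(θ:ℂ))
      = z1 * ((Em - Eex)/(I*(θ:ℂ)) + cpC θ * (Ep - Em)) := by
    rw [hcm]; ring
  rw [e, Complex.abs.map_mul]
  have hz1 : Complex.abs z1 ≤ 2*|θ| := F1 h1
  have hθp : 0 < |θ| := abs_pos.2 hθ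
  have hEd := Ediff_bound hθ h1 hτ
  have hEp := Ep_bound (θ := θ) h1 hτ
  have hEm := Em_bound hθ h1 hτ
  have h17 := F17 hθ h1
  have hin : Complex.abs ((Em - Eex)/(I*(θ:ℂ)) + cpC θ * (Ep - Em))
      ≤ (τ*|θ|^5) * Real.exp (τ*|θ|^5) / |θ| + (|θ|^4/40) * (1 + Real.exp (τ*|θ|^5)) := by
    refine le_trans (Complex.abs.add_le _ _) ?_
    have e1 : Complex.abs ((Em - Eex)/(I*(θ:ℂ))) = Complex.abs (Em - Eex) / |θ| := by
      rw [map_div₀, abs_Iθ]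
    have e2 : Complex.abs (cpC θ * (Ep - Em)) ≤ (|θ|^4/40) * (1 + Real.exp (τ*|θ|^5)) := by
      rw [Complex.abs.map_mul]
      have hPM : Complex.abs (Ep - Em) ≤ 1 + Real.exp (τ*|θ|^5) := by
        refine le_trans (abs_sub_le' _ _) ?_
        linarith
      have := Complex.abs.nonneg (cpC θ)
      nlinarith [Real.exp_pos (τ*|θ|^5), Complex.abs.nonneg (Ep - Em)]
    rw [e1]
    have : Complex.abs (Em - Eex) / |θ| ≤ (τ*|θ|^5) * Real.exp (τ*|θ|^5) / |θ| := by
      gcongr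
    linarith
  have hQ0 : 0 ≤ τ*|θ|^5 := mul_nonneg hτ (pow_nonneg (abs_nonneg θ) 5)
  have hexp1 : 1 ≤ Real.exp (τ*|θ|^5) := Real.one_le_exp hQ0
  have step1 : Complex.abs z1 * Complex.abs ((Em - Eex)/(I*(θ:ℂ)) + cpC θ * (Ep - Em))
      ≤ (2*|θ|) * ((τ*|θ|^5) * Real.exp (τ*|θ|^5) / |θ| + (|θ|^4/40) * (1 + Real.exp (τ*|θ|^5))) :=
    mul_le_mul hz1 hin (Complex.abs.nonneg _) (by positivity)
  set Q := τ*|θ|^5 with hQdef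
  have hc0 : (2*|θ|) * (Q * Real.exp Q / |θ|) = 2*Q*Real.exp Q := by
    field_simp
  have hc1 : 1 + Real.exp Q ≤ 2*Real.exp Q := by linarith
  have hc2 : |θ| * (1 + Real.exp Q) ≤ (1/100)*(2*Real.exp Q) := by
    have h1' : |θ| * (1 + Real.exp Q) ≤ (1/100)*(1 + Real.exp Q) := by
      apply mul_le_mul_of_nonneg_right h1
      linarith [Real.exp_pos Q]
    linarith [Real.exp_pos Q]
  have hc3 : (2*|θ|) * ((|θ|^4/40) * (1 + Real.exp Q)) ≤ |θ|^4 * Real.exp Q := by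
    have e3 : (2*|θ|) * ((|θ|^4/40) * (1 + Real.exp Q)) = (|θ| * (1 + Real.exp Q)) * (|θ|^4/20) := by ring
    rw [e3]
    have h4 : (0:ℝ) ≤ |θ|^4/20 := by positivity
    calc (|θ| * (1 + Real.exp Q)) * (|θ|^4/20) ≤ ((1/100)*(2*Real.exp Q)) * (|θ|^4/20) :=
          mul_le_mul_of_nonneg_right hc2 h4
      _ ≤ |θ|^4 * Real.exp Q := by nlinarith [Real.exp_pos Q, pow_nonneg (abs_nonneg θ) 4]
  calc Complex.abs z1 * Complex.abs ((Em - Eex)/(I*(θ:ℂ)) + cpC θ * (Ep - Em))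
      ≤ (2*|θ|) * (Q * Real.exp Q / |θ|) + (2*|θ|) * ((|θ|^4/40) * (1 + Real.exp Q)) := by
        rw [← mul_add] at *
        linarith [step1]
    _ ≤ 2*Q*Real.exp Q + |θ|^4 * Real.exp Q := by rw [hc0]; linarith
    _ = Real.exp Q * (2*Q + |θ|^4) := by ring

end est


set_option maxHeartbeats 1000000 in
theorem stmt_16 (L T lam : ℝ) (hL : 0 < L) (hT : 0 ≤ T) (hlam : 0 < lam)
    (m : ℤ) (hm : m ≠ 0) :
    ∃ C > 0, ∀ N : ℕ, 0 < N → ∀ w wb : ℤ → ℝ → ℂ,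
      let h : ℝ := L / N
      let κ : ℝ := 2 * m * Real.pi / L
      let x : ℤ → ℝ := fun j => j * h
      (∀ j : ℤ, w (j + N) = w j) →
      (∀ j : ℤ, wb (j + N) = wb j) →
      (∀ j : ℤ, ∀ t ∈ Set.Icc (0 : ℝ) T,
        HasDerivAt (wb j) (-(lam / h : ℂ) * (w (j + 1) t - w j t)) t) →
      (∀ j : ℤ, ∀ t ∈ Set.Icc (0 : ℝ) T,
        HasDerivAt (w j) (-(lam / h : ℂ) * (w (j - 1) t - (7 / 2) * wb (j - 1) t
          + 2 * w j t + (1 / 2) * wb j t)) t) →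
      (∀ j : ℤ, w j 0 = Complex.exp (Complex.I * κ * x j)) →
      (∀ j : ℤ, wb j 0 =
        (Complex.exp (Complex.I * κ * x (j + 1)) - Complex.exp (Complex.I * κ * x j)) /
          (Complex.I * κ * h)) →
      ∀ j : ℤ,
        ‖w j T - Complex.exp (Complex.I * κ * (x j - lam * T))‖ ≤ C * h ^ 4 ∧
        ‖wb j T -
          (Complex.exp (Complex.I * κ * (x (j + 1) - lam * T))
            - Complex.exp (Complex.I * κ * (x j - lam * T))) / (Complex.I * κ * h)‖
          ≤ C * h ^ 4 := by
  have hπ := Real.pi_pos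
  set κ0 : ℝ := 2 * m * Real.pi / L with hκ0
  have hκ0ne : κ0 ≠ 0 := by
    rw [hκ0]
    have : (m:ℝ) ≠ 0 := Int.cast_ne_zero.2 hm
    positivity
  set K : ℝ := |κ0| with hK
  have hKpos : 0 < K := abs_pos.2 hκ0ne
  set N₀ : ℕ := 700 * m.natAbs with hN₀
  have hN₀pos : 0 < N₀ := by
    have : m.natAbs ≠ 0 := Int.natAbs_ne_zero.2 hm
    omega
  set Q₀ : ℝ := lam*T*K^5*L^4 with hQ₀
  have hQ₀nn : 0 ≤ Q₀ := by positivity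
  set C₁ : ℝ := Real.exp Q₀ * (2*(lam*T*K^5) + K^4) with hC₁
  have hC₁nn : 0 ≤ C₁ := by positivity
  set M₀ : ℝ := 2 + 2*N₀/(K*L) with hM₀
  have hM₀2 : 2 ≤ M₀ := by
    rw [hM₀]
    have : 0 ≤ 2*(N₀:ℝ)/(K*L) := by positivity
    linarith
  set G : ℝ := M₀ * Real.exp (7*lam*T*N₀/L) with hG
  have hGnn : 0 ≤ G := by positivity
  set C₂ : ℝ := (G + M₀ + 1) * ((N₀:ℝ)/L)^4 with hC₂
  have hC₂nn : 0 ≤ C₂ := by positivity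
  clear_value κ0 K N₀ Q₀ C₁ M₀ G C₂
  refine ⟨C₁ + C₂ + 1, by linarith, ?_⟩
  intro N hN w wb h κ x hwper hwbper hode1 hode2 hinit1 hinit2
  have hNR : (0:ℝ) < N := by exact_mod_cast hN
  have hh : 0 < h := by show (0:ℝ) < L / N; positivity
  have hhL : h ≤ L := by
    show L / N ≤ L
    rw [div_le_iff₀ hNR]
    nlinarith [hNR, (by exact_mod_cast hN : (1:ℝ) ≤ N)]
  have hκκ0 : κ = κ0 := rfl
  set θ : ℝ := κ * h with hθdef
  have hθ0 : θ ≠ 0 := by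
    have : h ≠ 0 := ne_of_gt hh
    rw [hθdef, hκκ0]
    exact mul_ne_zero hκ0ne this
  have habsθ : |θ| = K * h := by
    rw [hθdef, hκκ0, abs_mul, _root_.abs_of_nonneg hh.le, hK]
  have hθN : θ * N = 2 * Real.pi * m := by
    rw [hθdef, hκκ0, hκ0]
    show 2 * m * Real.pi / L * (L / N) * N = 2 * Real.pi * m
    field_simp
  -- initial data bound
  have habs1 : ∀ r : ℝ, Complex.abs (Complex.exp (Complex.I * (r:ℂ))) = 1 := by
    intro r
    rw [Complex.abs_exp]
    simp
  have hIκx : ∀ j : ℤ, Complex.I * (κ:ℂ) * ((x j : ℝ):ℂ) = Complex.I * ((κ * x j : ℝ):ℂ) := by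
    intro j
    push_cast
    ring
  have habsinit1 : ∀ j : ℤ, Complex.abs (Complex.exp (Complex.I * (κ:ℂ) * ((x j : ℝ):ℂ))) = 1 := by
    intro j
    rw [hIκx j, habs1]
  by_cases hcase : N₀ ≤ N
  · -- fine regime
    have hmabs : (0:ℝ) < |(m:ℝ)| := abs_pos.2 (Int.cast_ne_zero.2 hm)
    have hNge : 700 * |(m:ℝ)| ≤ (N:ℝ) := by
      have : ((N₀:ℕ):ℝ) ≤ (N:ℝ) := by exact_mod_cast hcase
      rw [hN₀] at this
      push_cast at this
      simpa [Nat.cast_natAbs] using this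
    have hθsmall : |θ| ≤ 1/100 := by
      have hθNabs : |θ| * N = 2*Real.pi*|(m:ℝ)| := by
        have h1 : |θ * (N:ℝ)| = |2 * Real.pi * (m:ℝ)| := by rw [hθN]
        rw [abs_mul, _root_.abs_of_nonneg hNR.le] at h1
        rw [h1, abs_mul]
        congr 1
        exact _root_.abs_of_nonneg (by positivity)
      have hpi := Real.pi_lt_d2
      have h700 : |θ| * (700 * |(m:ℝ)|) ≤ |θ| * N :=
        mul_le_mul_of_nonneg_left hNge (abs_nonneg θ)
      nlinarith [abs_nonneg θ]
    set τ : ℝ := lam*T/h with hτdef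
    have hτ0 : 0 ≤ τ := by positivity
    have hch : (h:ℂ) ≠ 0 := Complex.ofReal_ne_zero.2 hh.ne'
    have hx : ∀ jj : ℤ, x jj = jj * h := fun _ => rfl
    have hκhc : (κ:ℂ)*(h:ℂ) = ((θ:ℝ):ℂ) := by
      rw [hθdef]; push_cast; ring
    set z : ℂ := Complex.exp (Complex.I*((θ:ℝ):ℂ)) with hz
    have hzne : z ≠ 0 := Complex.exp_ne_zero _
    have hzabs : Complex.abs z = 1 := absexp1' (θ := θ)
    have hzN : z^(N:ℤ) = 1 := by
      rw [hz, ← Complex.exp_int_mul]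
      have e : ((N:ℤ):ℂ) * (Complex.I*((θ:ℝ):ℂ)) = (m:ℂ) * (2*(Real.pi:ℂ)*Complex.I) := by
        have : ((θ * N : ℝ):ℂ) = ((2 * Real.pi * m : ℝ):ℂ) := congrArg (fun r : ℝ => (r:ℂ)) hθN
        push_cast at this
        push_cast
        linear_combination Complex.I * this
      rw [e, Complex.exp_int_mul_two_pi_mul_I]
    have hzj : ∀ jj : ℤ, Complex.exp (Complex.I*(κ:ℂ)*((x jj : ℝ):ℂ)) = z^jj := by
      intro jj
      rw [hz, ← Complex.exp_int_mul]
      congr 1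
      rw [hx jj]
      push_cast
      rw [hθdef]
      push_cast
      ring
    set cc : ℂ := -((lam:ℂ)/(h:ℂ)) with hcc
    set dm : ℂ := cc * mumC θ with hdm
    set dp : ℂ := cc * mupC θ with hdp
    set Wa : ℝ → ℂ := fun t => cmC θ*mumC θ*Complex.exp (dm*(t:ℂ)) + cpC θ*mupC θ*Complex.exp (dp*(t:ℂ)) with hWa
    set Wb : ℝ → ℂ := fun t => (z - 1) * (cmC θ*Complex.exp (dm*(t:ℂ)) + cpC θ*Complex.exp (dp*(t:ℂ))) with hWb
    set W : ℤ → ℝ → ℂ := fun jj t => Wa t * z^jj with hW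
    set WB : ℤ → ℝ → ℂ := fun jj t => Wb t * z^jj with hWB
    have hexp_deriv : ∀ (d : ℂ) (t : ℝ), HasDerivAt (fun s:ℝ => Complex.exp (d*(s:ℂ))) (d * Complex.exp (d*(t:ℂ))) t := by
      intro d t
      have := ((hasDerivAt_id t).ofReal_comp.const_mul d).cexp
      simpa [mul_comm] using this
    have h7 := F7 (θ := θ) hθsmall
    have hDCdef : DC θ = trC θ^2 - 4*detC θ := rfl
    have hdetdef : detC θ = (z - 1) * ecC θ := rfl
    have hm2 : mumC θ^2 = trC θ*mumC θ - detC θ := by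
      rw [mumC]
      linear_combination (1/4:ℂ)*h7 + (1/4:ℂ)*hDCdef
    have hp2 : mupC θ^2 = trC θ*mupC θ - detC θ := by
      rw [mupC]
      linear_combination (1/4:ℂ)*h7 + (1/4:ℂ)*hDCdef
    have hWaODE : ∀ t : ℝ, HasDerivAt Wa (cc * (trC θ * Wa t - ecC θ * Wb t)) t := by
      intro t
      have d1 := (hexp_deriv dm t).const_mul (cmC θ*mumC θ)
      have d2 := (hexp_deriv dp t).const_mul (cpC θ*mupC θ)
      have sum := d1.add d2
      convert sum using 1
      · rfl
      · rfl
      rw [hWa, hWb, hdm, hdp]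
      simp only
      linear_combination (-(cc * (cmC θ * Complex.exp (cc * mumC θ*(t:ℂ))))) * hm2
        + (-(cc * (cpC θ * Complex.exp (cc * mupC θ*(t:ℂ))))) * hp2
        + (cc * (cmC θ * Complex.exp (cc * mumC θ*(t:ℂ)) + cpC θ * Complex.exp (cc * mupC θ*(t:ℂ)))) * hdetdef
    have hWbODE : ∀ t : ℝ, HasDerivAt Wb (cc * ((z - 1) * Wa t)) t := by
      intro t
      have d1 := (hexp_deriv dm t).const_mul (cmC θ)
      have d2 := (hexp_deriv dp t).const_mul (cpC θ)
      have sum := (d1.add d2).const_mul (z - 1)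
      convert sum using 1
      · rfl
      · rfl
      rw [hWa, hdm, hdp]
      simp only
      ring
    have hWODE2 : ∀ (jj : ℤ) (t : ℝ), HasDerivAt (W jj)
        (cc * (W (jj-1) t - (7/2)*WB (jj-1) t + 2*W jj t + (1/2)*WB jj t)) t := by
      intro jj t
      have base := (hWaODE t).mul_const (z^jj)
      have : W jj = fun tt => Wa tt * z^jj := by rw [hW]
      rw [this]
      convert base using 1
      · rfl
      rw [hW, hWB]
      simp only
      have hzm : z^(jj-1) = z^jj * z⁻¹ := zpow_sub_one₀ hzne jj
      have hzi : z⁻¹ = Complex.exp (-(Complex.I*((θ:ℝ):ℂ))) := by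
        rw [hz, ← Complex.exp_neg]
      rw [hzm, hzi, trC, ecC]
      ring
    have hWODE1 : ∀ (jj : ℤ) (t : ℝ), HasDerivAt (WB jj) (cc * (W (jj+1) t - W jj t)) t := by
      intro jj t
      have base := (hWbODE t).mul_const (z^jj)
      have : WB jj = fun tt => Wb tt * z^jj := by rw [hWB]
      rw [this]
      convert base using 1
      · rfl
      rw [hW]
      simp only
      have hzp : z^(jj+1) = z^jj * z := by
        rw [zpow_add_one₀ hzne]
      rw [hzp]
      ring
    have h16a := F16a hθ0 hθsmall
    have h16b := F16b hθ0 hθsmall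
    have hWa0 : Wa 0 = 1 := by
      rw [hWa]
      simp only [Complex.ofReal_zero, mul_zero, Complex.exp_zero, mul_one]
      exact h16a
    have hWb0 : Wb 0 = (z - 1) / (Complex.I*((θ:ℝ):ℂ)) := by
      rw [hWb]
      simp only [Complex.ofReal_zero, mul_zero, Complex.exp_zero, mul_one]
      rw [h16b]
      ring
    have hW0 : ∀ jj : ℤ, W jj 0 = Complex.exp (Complex.I*(κ:ℂ)*((x jj : ℝ):ℂ)) := by
      intro jj
      rw [hzj jj, hW]
      simp only
      rw [hWa0, one_mul]
    have hIκh : Complex.I*(κ:ℂ)*(h:ℂ) = Complex.I*((θ:ℝ):ℂ) := by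
      rw [mul_assoc, hκhc]
    have hWB0 : ∀ jj : ℤ, WB jj 0 = (Complex.exp (Complex.I*(κ:ℂ)*((x (jj+1) : ℝ):ℂ))
        - Complex.exp (Complex.I*(κ:ℂ)*((x jj : ℝ):ℂ))) / (Complex.I*(κ:ℂ)*(h:ℂ)) := by
      intro jj
      rw [hzj jj, hzj (jj+1), hIκh, hWB]
      simp only
      rw [hWb0]
      have hzp : z^(jj+1) = z^jj * z := by rw [zpow_add_one₀ hzne]
      rw [hzp]
      ring
    have hWper : ∀ jj : ℤ, W (jj + N) = W jj := by
      intro jj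
      funext t
      rw [hW]
      simp only
      rw [zpow_add₀ hzne, hzN, mul_one]
    have hWBper : ∀ jj : ℤ, WB (jj + N) = WB jj := by
      intro jj
      funext t
      rw [hWB]
      simp only
      rw [zpow_add₀ hzne, hzN, mul_one]
    -- uniqueness via gronwall on differences
    set dw : ℤ → ℝ → ℂ := fun jj t => w jj t - W jj t with hdw
    set dwb : ℤ → ℝ → ℂ := fun jj t => wb jj t - WB jj t with hdwb
    have hdwper : ∀ jj : ℤ, dw (jj + N) = dw jj := by
      intro jj; funext t
      rw [hdw]; simp only
      rw [congrFun (hwper jj) t, congrFun (hWper jj) t]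
    have hdwbper : ∀ jj : ℤ, dwb (jj + N) = dwb jj := by
      intro jj; funext t
      rw [hdwb]; simp only
      rw [congrFun (hwbper jj) t, congrFun (hWBper jj) t]
    have hdode1 : ∀ jj : ℤ, ∀ t ∈ Set.Icc (0:ℝ) T,
        HasDerivAt (dwb jj) (cc * (dw (jj+1) t - dw jj t)) t := by
      intro jj t ht
      have := (hode1 jj t ht).sub (hWODE1 jj t)
      have e : dwb jj = fun t => wb jj t - WB jj t := by rw [hdwb]
      rw [e]
      convert this using 1
      · rfl
      · rfl
      rw [hdw, hcc]
      simp only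
      ring
    have hdode2 : ∀ jj : ℤ, ∀ t ∈ Set.Icc (0:ℝ) T,
        HasDerivAt (dw jj) (cc * (dw (jj-1) t - (7/2)*dwb (jj-1) t + 2*dw jj t + (1/2)*dwb jj t)) t := by
      intro jj t ht
      have := (hode2 jj t ht).sub (hWODE2 jj t)
      have e : dw jj = fun t => w jj t - W jj t := by rw [hdw]
      rw [e]
      convert this using 1
      · rfl
      · rfl
      rw [hdw, hdwb, hcc]
      simp only
      ring
    have hdinit : ∀ jj : ℤ, Complex.abs (dw jj 0) ≤ 0 ∧ Complex.abs (dwb jj 0) ≤ 0 := by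
      intro jj
      constructor
      · rw [hdw]; simp only
        rw [hinit1 jj, hW0 jj, sub_self]
        simp
      · rw [hdwb]; simp only
        rw [hinit2 jj, hWB0 jj, sub_self]
        simp
    have huniq := gron hN cc T hT 0 le_rfl dw dwb hdwper hdwbper hdode1 hdode2 hdinit
    have hwT : ∀ jj : ℤ, w jj T = W jj T := by
      intro jj
      have := (huniq jj).1
      rw [zero_mul] at this
      have h0 := le_antisymm this (Complex.abs.nonneg _)
      have := Complex.abs.eq_zero.1 h0
      rw [hdw] at this
      simp only at this
      exact sub_eq_zero.1 this
    have hwbT : ∀ jj : ℤ, wb jj T = WB jj T := by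
      intro jj
      have := (huniq jj).2
      rw [zero_mul] at this
      have h0 := le_antisymm this (Complex.abs.nonneg _)
      have := Complex.abs.eq_zero.1 h0
      rw [hdwb] at this
      simp only at this
      exact sub_eq_zero.1 this
    -- final estimates
    have hτc : ((τ:ℝ):ℂ) = (lam:ℂ)*(T:ℂ)/(h:ℂ) := by
      rw [hτdef]; push_cast; ring
    have hτm : dm*((T:ℝ):ℂ) = -((τ:ℝ):ℂ)*mumC θ := by
      rw [hdm, hcc, hτc]; ring
    have hτp : dp*((T:ℝ):ℂ) = -((τ:ℝ):ℂ)*mupC θ := by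
      rw [hdp, hcc, hτc]; ring
    have hτθ : (τ:ℝ) * θ = κ * (lam * T) := by
      rw [hτdef, hθdef]
      field_simp [hh.ne']
    have hexact1 : ∀ jj : ℤ, Complex.exp (Complex.I*(κ:ℂ)*(((x jj : ℝ):ℂ) - (lam:ℂ)*(T:ℂ)))
        = z^jj * Complex.exp (-((τ:ℝ):ℂ)*(Complex.I*((θ:ℝ):ℂ))) := by
      intro jj
      rw [← hzj jj, ← Complex.exp_add]
      congr 1
      have : ((τ * θ : ℝ):ℂ) = ((κ * (lam * T) : ℝ):ℂ) := congrArg (fun r : ℝ => (r:ℂ)) hτθ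
      push_cast at this
      push_cast
      linear_combination Complex.I * this
    have hQval : τ*|θ|^5 = lam*T*K^5*h^4 := by
      rw [habsθ, hτdef]
      field_simp
    have hQle : τ*|θ|^5 ≤ Q₀ := by
      rw [hQval, hQ₀]
      have h4 : h^4 ≤ L^4 := pow_le_pow_left₀ hh.le hhL 4
      have : 0 ≤ lam*T*K^5 := mul_nonneg (mul_nonneg hlam.le hT) (pow_nonneg hKpos.le 5)
      nlinarith
    have hθ4 : |θ|^4 = K^4*h^4 := by
      rw [habsθ]; ring
    have hboundconv : Real.exp (τ*|θ|^5) * (2*(τ*|θ|^5) + |θ|^4) ≤ C₁ * h^4 := by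
      rw [hC₁]
      have he : Real.exp (τ*|θ|^5) ≤ Real.exp Q₀ := Real.exp_le_exp.2 hQle
      have hv : 2*(τ*|θ|^5) + |θ|^4 = (2*(lam*T*K^5) + K^4)*h^4 := by
        rw [hQval, hθ4]; ring
      have hc5 : (0:ℝ) ≤ lam*T*K^5 := mul_nonneg (mul_nonneg hlam.le hT) (pow_nonneg hKpos.le 5)
      have hc4 : (0:ℝ) ≤ K^4 := pow_nonneg hKpos.le 4
      have h4nn : (0:ℝ) ≤ h^4 := by positivity
      have hcoef : (0:ℝ) ≤ (2*(lam*T*K^5) + K^4)*h^4 := mul_nonneg (by linarith) h4nn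
      calc Real.exp (τ*|θ|^5) * (2*(τ*|θ|^5) + |θ|^4)
          = Real.exp (τ*|θ|^5) * ((2*(lam*T*K^5) + K^4)*h^4) := by rw [hv]
        _ ≤ Real.exp Q₀ * ((2*(lam*T*K^5) + K^4)*h^4) := mul_le_mul_of_nonneg_right he hcoef
        _ = Real.exp Q₀ * (2*(lam*T*K^5) + K^4) * h^4 := by ring
    have hCfin : C₁ * h^4 ≤ (C₁ + C₂ + 1) * h^4 := by
      have h4nn : (0:ℝ) ≤ h^4 := by positivity
      nlinarith
    intro j
    simp only [Complex.norm_eq_abs]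
    have habszj : Complex.abs (z^j) = 1 := by
      rw [map_zpow₀, hzabs, one_zpow]
    constructor
    · rw [hwT j, hexact1 j]
      have e : W j T - z^j * Complex.exp (-((τ:ℝ):ℂ)*(Complex.I*((θ:ℝ):ℂ)))
          = (Wa T - Complex.exp (-((τ:ℝ):ℂ)*(Complex.I*((θ:ℝ):ℂ)))) * z^j := by
        rw [hW]; simp only; ring
      rw [e, Complex.abs.map_mul, habszj, mul_one]
      have eWa : Wa T = cmC θ*mumC θ*Complex.exp (-((τ:ℝ):ℂ)*mumC θ) + cpC θ*mupC θ*Complex.exp (-((τ:ℝ):ℂ)*mupC θ) := by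
        rw [hWa]; simp only
        rw [hτm, hτp]
      rw [eWa]
      exact le_trans (estA hθ0 hθsmall hτ0) (le_trans hboundconv hCfin)
    · rw [hwbT j]
      have e2 : (Complex.exp (Complex.I*(κ:ℂ)*(((x (j+1) : ℝ):ℂ) - (lam:ℂ)*(T:ℂ)))
          - Complex.exp (Complex.I*(κ:ℂ)*(((x j : ℝ):ℂ) - (lam:ℂ)*(T:ℂ)))) / (Complex.I*(κ:ℂ)*(h:ℂ))
          = (Complex.exp (-((τ:ℝ):ℂ)*(Complex.I*((θ:ℝ):ℂ))) * (z - 1) / (Complex.I*((θ:ℝ):ℂ))) * z^j := by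
        rw [hexact1 j, hexact1 (j+1), hIκh]
        have hzp : z^(j+1) = z^j * z := by rw [zpow_add_one₀ hzne]
        rw [hzp]
        ring
      rw [e2]
      have e3 : WB j T - Complex.exp (-((τ:ℝ):ℂ)*(Complex.I*((θ:ℝ):ℂ))) * (z - 1) / (Complex.I*((θ:ℝ):ℂ)) * z^j
          = ((z - 1) * (cmC θ*Complex.exp (-((τ:ℝ):ℂ)*mumC θ) + cpC θ*Complex.exp (-((τ:ℝ):ℂ)*mupC θ))
            - Complex.exp (-((τ:ℝ):ℂ)*(Complex.I*((θ:ℝ):ℂ))) * (z - 1) / (Complex.I*((θ:ℝ):ℂ))) * z^j := by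
        rw [hWB, hWb]; simp only
        rw [hτm, hτp]
        ring
      rw [e3, Complex.abs.map_mul, habszj, mul_one]
      exact le_trans (estB hθ0 hθsmall hτ0) (le_trans hboundconv hCfin)
  · -- crude regime
    push_neg at hcase
    have hhlow : L / N₀ ≤ h := by
      show L / (N₀:ℝ) ≤ L / N
      apply div_le_div_of_nonneg_left hL.le hNR
      exact_mod_cast hcase.le
    have hN₀R : (0:ℝ) < N₀ := by exact_mod_cast hN₀pos
    have hbex : ∀ a b : ℂ, Complex.abs a = 1 → Complex.abs b = 1 →
        Complex.abs ((a - b) / (Complex.I * (κ:ℂ) * (h:ℂ))) ≤ M₀ := by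
      intro a b ha hb
      rw [map_div₀]
      have hnum : Complex.abs (a - b) ≤ 2 := by
        refine le_trans (abs_sub_le' a b) ?_
        rw [ha, hb]; norm_num
      have hden : Complex.abs (Complex.I * (κ:ℂ) * (h:ℂ)) = K * h := by
        rw [Complex.abs.map_mul, Complex.abs.map_mul, Complex.abs_I, one_mul,
          Complex.abs_ofReal, Complex.abs_ofReal, hK, hκκ0, _root_.abs_of_nonneg hh.le]
      rw [hden]
      have hKh : 0 < K * h := mul_pos hKpos hh
      rw [div_le_iff₀ hKh]
      have hMKh : 2 ≤ M₀ * (K * h) := by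
        have hKL : 0 < K * L := mul_pos hKpos hL
        have hM₀0 : (0:ℝ) ≤ M₀ := by linarith
        have hstep : K * (L/N₀) ≤ K * h := mul_le_mul_of_nonneg_left hhlow hKpos.le
        have e1 : M₀ * (K * (L/N₀)) ≤ M₀ * (K * h) := mul_le_mul_of_nonneg_left hstep hM₀0
        have e2 : M₀ * (K * (L/N₀)) = 2*(K*L)/N₀ + 2 := by
          rw [hM₀]; field_simp
        have : 0 ≤ 2*(K*L)/(N₀:ℝ) := div_nonneg (by nlinarith [mul_pos hKpos hL]) hN₀R.le
        linarith
      linarith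
    have hinitM : ∀ j : ℤ, Complex.abs (w j 0) ≤ M₀ ∧ Complex.abs (wb j 0) ≤ M₀ := by
      intro j
      constructor
      · rw [hinit1 j, habsinit1 j]; linarith
      · rw [hinit2 j]
        exact hbex _ _ (habsinit1 (j+1)) (habsinit1 j)
    have hgron := gron hN (-((lam:ℂ)/(h:ℂ))) T hT M₀ (by linarith) w wb hwper hwbper
      (fun j t ht => hode1 j t ht) (fun j t ht => hode2 j t ht) hinitM
    have habsc : Complex.abs (-((lam:ℂ)/(h:ℂ))) = lam/h := by
      rw [Complex.abs.map_neg, map_div₀, Complex.abs_ofReal, Complex.abs_ofReal,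
        _root_.abs_of_nonneg hlam.le, _root_.abs_of_nonneg hh.le]
    have hcT : 7 * Complex.abs (-((lam:ℂ)/(h:ℂ))) * T ≤ 7*lam*T*N₀/L := by
      rw [habsc]
      have : lam / h ≤ lam * N₀ / L := by
        rw [div_le_div_iff₀ hh hL]
        have hLNh : L ≤ h * N₀ := (div_le_iff₀ hN₀R).1 hhlow
        nlinarith
      calc 7 * (lam/h) * T ≤ 7 * (lam * N₀ / L) * T := by nlinarith
        _ = 7*lam*T*N₀/L := by ring
    have hbound : ∀ j : ℤ, Complex.abs (w j T) ≤ G ∧ Complex.abs (wb j T) ≤ G := by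
      intro j
      have := hgron j
      have hmono : M₀ * Real.exp (7 * Complex.abs (-((lam:ℂ)/(h:ℂ))) * T) ≤ G := by
        rw [hG]
        apply mul_le_mul_of_nonneg_left _ (by linarith)
        exact Real.exp_le_exp.2 hcT
      exact ⟨le_trans this.1 hmono, le_trans this.2 hmono⟩
    have hCh : G + M₀ + 1 ≤ (C₁ + C₂ + 1) * h^4 := by
      have hh4 : (L/(N₀:ℝ))^4 ≤ h^4 := by
        apply pow_le_pow_left₀ (by positivity) hhlow
      have e : C₂ * (L/(N₀:ℝ))^4 = G + M₀ + 1 := by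
        have h11 : ((N₀:ℝ)/L)^4 * ((L/(N₀:ℝ)))^4 = 1 := by
          rw [← mul_pow]
          field_simp
        calc C₂ * (L/(N₀:ℝ))^4 = (G + M₀ + 1) * (((N₀:ℝ)/L)^4 * ((L/(N₀:ℝ)))^4) := by
              rw [hC₂]; ring
          _ = G + M₀ + 1 := by rw [h11, mul_one]
      have hle : C₂ * (L/(N₀:ℝ))^4 ≤ C₂ * h^4 := by
        apply mul_le_mul_of_nonneg_left hh4 hC₂nn
      have h4nn : 0 ≤ h^4 := by positivity
      have expand : (C₁+C₂+1)*h^4 = (C₁+1)*h^4 + C₂*h^4 := by ring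
      nlinarith [mul_nonneg (by linarith : (0:ℝ) ≤ C₁ + 1) h4nn]
    intro j
    simp only [Complex.norm_eq_abs]
    constructor
    · have hb := (hbound j).1
      refine le_trans (le_trans (abs_sub_le' _ _) ?_) hCh
      have habsT : Complex.abs (Complex.exp (Complex.I * (κ:ℂ) * (((x j : ℝ):ℂ) - (lam:ℂ)*(T:ℂ)))) = 1 := by
        have e : Complex.I * (κ:ℂ) * (((x j : ℝ):ℂ) - (lam:ℂ)*(T:ℂ)) = Complex.I * ((κ * (x j - lam*T) : ℝ):ℂ) := by
          push_cast; ring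
        rw [e, habs1]
      rw [habsT]
      linarith
    · have hb := (hbound j).2
      refine le_trans (le_trans (abs_sub_le' _ _) ?_) hCh
      have e2 : Complex.abs ((Complex.exp (Complex.I * (κ:ℂ) * (((x (j+1) : ℝ):ℂ) - (lam:ℂ)*(T:ℂ)))
          - Complex.exp (Complex.I * (κ:ℂ) * (((x j : ℝ):ℂ) - (lam:ℂ)*(T:ℂ)))) / (Complex.I * (κ:ℂ) * (h:ℂ))) ≤ M₀ := by
        apply hbex
        · have e : Complex.I * (κ:ℂ) * (((x (j+1) : ℝ):ℂ) - (lam:ℂ)*(T:ℂ)) = Complex.I * ((κ * (x (j+1) - lam*T) : ℝ):ℂ) := by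
            push_cast; ring
          rw [e, habs1]
        · have e : Complex.I * (κ:ℂ) * (((x j : ℝ):ℂ) - (lam:ℂ)*(T:ℂ)) = Complex.I * ((κ * (x j - lam*T) : ℝ):ℂ) := by
            push_cast; ring
          rw [e, habs1]
      linarith
end
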